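/- arXiv:2507.14278 — 7 statements merged into one kernel-verified Lean document; each statement's English description precedes it below -/
import Mathlib

section
/- Let p_1, ..., p_m be nonnegative real numbers forming a probability distribution with all p_i > 0. Then the m×m matrix H with entries H_{ij} = 2√(p_i p_j)/(p_i + p_j) is a correlation matrix, i.e., H is positive semidefinite and all its diagonal entries equal 1. -/
open Matrix
open scoped ComplexOrder

open MeasureTheory Set

lemma integral_exp_neg_mul_Ioi_aux {c : ℝ} (hc : 0 < c) :
    ∫ x in Ioi (0:ℝ), Real.exp (-c * x) = 1 / c := by
  have h := MeasureTheory.integral_comp_mul_left_Ioi (fun y => Real.exp (-y)) 0 hc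
  simp only [mul_zero] at h
  rw [show (fun x : ℝ => Real.exp (-c * x)) = fun x => (fun y => Real.exp (-y)) (c * x) by
    funext x; simp [neg_mul]]
  rw [h, integral_exp_neg_Ioi_zero, smul_eq_mul, mul_one, one_div]

lemma real_quadform_nonneg (m : ℕ) (p : Fin m → ℝ) (hp : ∀ i, 0 < p i) (v : Fin m → ℝ) :
    0 ≤ ∑ i, ∑ j, v i * v j * (2 * Real.sqrt (p i * p j) / (p i + p j)) := by
  set f : ℝ → ℝ := fun t => ∑ i, v i * Real.sqrt (2 * p i) * Real.exp (-p i * t) with hf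
  have key : ∑ i, ∑ j, v i * v j * (2 * Real.sqrt (p i * p j) / (p i + p j))
      = ∫ t in Ioi (0:ℝ), (f t) ^ 2 := by
    have hsq : ∀ t : ℝ, (f t) ^ 2 = ∑ i, ∑ j,
        (v i * Real.sqrt (2 * p i)) * (v j * Real.sqrt (2 * p j))
          * Real.exp (-(p i + p j) * t) := by
      intro t
      rw [hf, sq, Finset.sum_mul_sum]
      refine Finset.sum_congr rfl fun i _ => Finset.sum_congr rfl fun j _ => ?_
      rw [show -(p i + p j) * t = -p i * t + -p j * t by ring, Real.exp_add]
      ring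
    rw [MeasureTheory.setIntegral_congr_fun measurableSet_Ioi (fun t _ => hsq t)]
    have hint : ∀ i j : Fin m, IntegrableOn (fun t : ℝ =>
        (v i * Real.sqrt (2 * p i)) * (v j * Real.sqrt (2 * p j))
          * Real.exp (-(p i + p j) * t)) (Ioi (0:ℝ)) := by
      intro i j
      exact (exp_neg_integrableOn_Ioi 0 (add_pos (hp i) (hp j))).const_mul _
    rw [MeasureTheory.integral_finset_sum _ (fun i _ => MeasureTheory.integrable_finset_sum _
        (fun j _ => hint i j))]
    refine Finset.sum_congr rfl fun i _ => ?_
    rw [MeasureTheory.integral_finset_sum _ (fun j _ => hint i j)]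
    refine Finset.sum_congr rfl fun j _ => ?_
    rw [MeasureTheory.integral_const_mul, integral_exp_neg_mul_Ioi_aux (add_pos (hp i) (hp j))]
    have hs : Real.sqrt (2 * p i) * Real.sqrt (2 * p j) = 2 * Real.sqrt (p i * p j) := by
      rw [← Real.sqrt_mul (by nlinarith [hp i]), show 2 * p i * (2 * p j) = 4 * (p i * p j) by ring,
        Real.sqrt_mul (by norm_num), show Real.sqrt 4 = 2 by
          rw [show (4:ℝ) = 2^2 by norm_num, Real.sqrt_sq (by norm_num)]]
    have h2 : v i * Real.sqrt (2 * p i) * (v j * Real.sqrt (2 * p j))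
        = v i * v j * (2 * Real.sqrt (p i * p j)) := by rw [← hs]; ring
    rw [h2]; ring
  rw [key]
  exact MeasureTheory.integral_nonneg fun t => sq_nonneg _

/-- The harmonic-to-arithmetic mean matrix `H i j = 2 √(p i * p j) / (p i + p j)` associated
with a strictly positive probability distribution `p` is a correlation matrix: it is positive
semidefinite and all its diagonal entries equal `1`. -/
theorem harmonic_mean_matrix_is_correlation (m : ℕ) (p : Fin m → ℝ)
    (hp : ∀ i, 0 < p i) (hsum : ∑ i, p i = 1) :
    (Matrix.of fun i j : Fin m =>
        ((2 * Real.sqrt (p i * p j) / (p i + p j) : ℝ) : ℂ)).PosSemidef ∧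
    ∀ i : Fin m,
      (Matrix.of fun i j : Fin m =>
        ((2 * Real.sqrt (p i * p j) / (p i + p j) : ℝ) : ℂ)) i i = 1 := by
  set h : Fin m → Fin m → ℝ := fun i j => 2 * Real.sqrt (p i * p j) / (p i + p j) with hh
  have hsymm : ∀ i j, h i j = h j i := by
    intro i j; simp only [hh, mul_comm (p i) (p j), add_comm (p i) (p j)]
  constructor
  · refine posSemidef_iff_dotProduct_mulVec.mpr ⟨?_, ?_⟩
    · ext i j
      simp only [conjTranspose_apply, of_apply, Complex.star_def, Complex.conj_ofReal,
        mul_comm (p i) (p j), add_comm (p i) (p j)]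
    · intro x
      have hd : star x ⬝ᵥ ((Matrix.of fun i j : Fin m => ((h i j : ℝ) : ℂ)) *ᵥ x)
          = ∑ i, ∑ j, ((h i j : ℝ) : ℂ) * (starRingEnd ℂ (x i) * x j) := by
        simp only [dotProduct, mulVec, of_apply, Pi.star_apply, Complex.star_def,
          Finset.mul_sum]
        exact Finset.sum_congr rfl fun i _ => Finset.sum_congr rfl fun j _ => by ring
      rw [hd, Complex.le_def]
      set a : Fin m → ℝ := fun i => (x i).re with ha
      set b : Fin m → ℝ := fun i => (x i).im with hb
      have hterm_re : ∀ i j, (((h i j : ℝ) : ℂ) * (starRingEnd ℂ (x i) * x j)).re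
          = a i * a j * h i j + b i * b j * h i j := by
        intro i j
        simp only [Complex.mul_re, Complex.mul_im, Complex.ofReal_re, Complex.ofReal_im,
          Complex.conj_re, Complex.conj_im, ha, hb]
        ring
      have hterm_im : ∀ i j, (((h i j : ℝ) : ℂ) * (starRingEnd ℂ (x i) * x j)).im
          = h i j * (a i * b j - b i * a j) := by
        intro i j
        simp only [Complex.mul_re, Complex.mul_im, Complex.ofReal_re, Complex.ofReal_im,
          Complex.conj_re, Complex.conj_im, ha, hb]
        ring
      constructor
      · simp only [Complex.re_sum, hterm_re, Complex.zero_re, Finset.sum_add_distrib]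
        exact add_nonneg (real_quadform_nonneg m p hp a) (real_quadform_nonneg m p hp b)
      · simp only [Complex.im_sum, hterm_im, Complex.zero_im]
        have hswap : ∑ i, ∑ j, h i j * (a i * b j - b i * a j)
            = -∑ i, ∑ j, h i j * (a i * b j - b i * a j) := by
          calc ∑ i, ∑ j, h i j * (a i * b j - b i * a j)
              = ∑ j, ∑ i, h i j * (a i * b j - b i * a j) := Finset.sum_comm
            _ = ∑ j, ∑ i, -(h j i * (a j * b i - b j * a i)) := by
                refine Finset.sum_congr rfl fun j _ => Finset.sum_congr rfl fun i _ => ?_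
                rw [hsymm j i]; ring
            _ = -∑ i, ∑ j, h i j * (a i * b j - b i * a j) := by
                simp [Finset.sum_neg_distrib]
        linarith [hswap]
  · intro i
    simp only [of_apply]
    rw [Real.sqrt_mul_self (hp i).le]
    have h1 : (2 * p i / (p i + p i) : ℝ) = 1 := by
      rw [two_mul]; exact div_self (by nlinarith [hp i])
    rw [h1, Complex.ofReal_one]
end

section
/- Let A be an m×m positive definite Hermitian matrix and B an m×m complex matrix. Then the Sylvester equation AX + XA = B has a unique solution X, given by X = ∫_0^∞ e^{-tA} B e^{-tA} dt. -/
open Matrix MeasureTheory NormedSpace Set Filter Topology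
open scoped Topology
open scoped ComplexOrder

attribute [local instance] Matrix.linftyOpNormedRing Matrix.linftyOpNormedAlgebra

variable {m : ℕ}

theorem exp_neg_smul_posDef (A : Matrix (Fin m) (Fin m) ℂ) (hA : A.PosDef) (t : ℝ) :
    exp (-(t • A)) = (hA.1.eigenvectorUnitary : Matrix (Fin m) (Fin m) ℂ) *
      diagonal (fun k => Complex.exp (-(t * hA.1.eigenvalues k))) *
      star (hA.1.eigenvectorUnitary : Matrix (Fin m) (Fin m) ℂ) := by
  set U : Matrix (Fin m) (Fin m) ℂ := (hA.1.eigenvectorUnitary : Matrix (Fin m) (Fin m) ℂ) with hUdef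
  have hU : IsUnit U := ⟨⟨U, star U, hA.1.eigenvectorUnitary.2.2, hA.1.eigenvectorUnitary.2.1⟩, rfl⟩
  have hUinv : U⁻¹ = star U := Matrix.inv_eq_left_inv hA.1.eigenvectorUnitary.2.1
  have hspec : A = U * Matrix.diagonal (RCLike.ofReal ∘ hA.1.eigenvalues) * star U := hA.1.spectral_theorem
  have h1 : -(t • A) = U * diagonal (fun k => ((-(t * hA.1.eigenvalues k) : ℝ) : ℂ)) * star U := by
    conv_lhs => rw [hspec]
    rw [← smul_mul_assoc, ← mul_smul_comm, ← neg_mul, ← mul_neg, ← Matrix.diagonal_smul]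
    congr 2
    rw [Matrix.diagonal_neg]
    refine congrArg Matrix.diagonal (funext fun k => ?_)
    simp only [Pi.smul_apply, Function.comp_apply, Complex.real_smul]
    push_cast
    rfl
  rw [h1, ← hUinv, Matrix.exp_conj U _ hU, Matrix.exp_diagonal, hUinv]
  have he : exp (fun k => ((-(t * hA.1.eigenvalues k) : ℝ) : ℂ))
      = fun k => Complex.exp (-((t : ℂ) * (hA.1.eigenvalues k : ℂ))) := by
    funext k
    rw [Pi.coe_exp, ← Complex.exp_eq_exp_ℂ]
    push_cast
    ring_nf
  rw [he]

theorem entry_bound (A : Matrix (Fin m) (Fin m) ℂ) (hA : A.PosDef) :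
    ∃ δ : ℝ, 0 < δ ∧ ∃ K : ℝ, 0 ≤ K ∧ ∀ i j : Fin m, ∀ t : ℝ, 0 ≤ t →
      ‖exp (-(t • A)) i j‖ ≤ K * Real.exp (-(δ * t)) := by
  by_cases hm : Nonempty (Fin m)
  · have hne : (Finset.univ : Finset (Fin m)).Nonempty := Finset.univ_nonempty
    set ev := hA.1.eigenvalues with hev
    refine ⟨Finset.univ.inf' hne ev, ?_, ?_⟩
    · rw [Finset.lt_inf'_iff]
      exact fun k _ => hA.eigenvalues_pos k
    set δ := Finset.univ.inf' hne ev with hδ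
    have hδk : ∀ k, δ ≤ ev k := fun k => Finset.inf'_le ev (Finset.mem_univ k)
    set U : Matrix (Fin m) (Fin m) ℂ := (hA.1.eigenvectorUnitary : Matrix (Fin m) (Fin m) ℂ)
    set S : Fin m → Fin m → ℝ := fun i j => ∑ k, ‖U i k‖ * ‖star U k j‖ with hS
    have hSnonneg : ∀ i j, 0 ≤ S i j := fun i j => Finset.sum_nonneg fun k _ => by positivity
    refine ⟨∑ i, ∑ j, S i j,
      Finset.sum_nonneg fun k _ => Finset.sum_nonneg fun l _ => hSnonneg k l,
      fun i j t ht => ?_⟩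
    have hSK : S i j ≤ ∑ i, ∑ j, S i j := by
      calc S i j ≤ ∑ j, S i j :=
              Finset.single_le_sum (fun k _ => hSnonneg i k) (Finset.mem_univ j)
        _ ≤ ∑ i, ∑ j, S i j :=
              Finset.single_le_sum (fun k _ => Finset.sum_nonneg fun l _ => hSnonneg k l)
                (Finset.mem_univ i)
    rw [exp_neg_smul_posDef A hA t]
    calc ‖((U * diagonal (fun k => Complex.exp (-(t * ev k))) * star U)) i j‖
        = ‖∑ k, U i k * Complex.exp (-(t * ev k)) * star U k j‖ := by
          rw [Matrix.mul_apply]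
          congr 1
          refine Finset.sum_congr rfl fun k _ => ?_
          rw [Matrix.mul_diagonal]
      _ ≤ ∑ k, ‖U i k * Complex.exp (-(t * ev k)) * star U k j‖ := norm_sum_le _ _
      _ = ∑ k, ‖U i k‖ * ‖star U k j‖ * Real.exp (-(t * ev k)) := by
          refine Finset.sum_congr rfl fun k _ => ?_
          rw [norm_mul, norm_mul]
          rw [show ‖Complex.exp (-(↑t * ↑(ev k)))‖ = Real.exp (-(t * ev k)) by
            rw [Complex.norm_exp]
            norm_num]
          ring
      _ ≤ ∑ k, ‖U i k‖ * ‖star U k j‖ * Real.exp (-(δ * t)) := by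
          refine Finset.sum_le_sum fun k _ => ?_
          have h1 : -(t * ev k) ≤ -(δ * t) := by nlinarith [hδk k]
          have := Real.exp_le_exp.2 h1
          have h0 : 0 ≤ ‖U i k‖ * ‖star U k j‖ := by positivity
          exact mul_le_mul_of_nonneg_left this h0
      _ = S i j * Real.exp (-(δ * t)) := by rw [← Finset.sum_mul]
      _ ≤ (∑ i, ∑ j, S i j) * Real.exp (-(δ * t)) := by
          exact mul_le_mul_of_nonneg_right hSK (Real.exp_nonneg _)
  · exact ⟨1, one_pos, 0, le_refl 0, fun i _ _ _ => absurd ⟨i⟩ hm⟩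

theorem hasDerivAt_F (A C : Matrix (Fin m) (Fin m) ℂ) (t : ℝ) :
    HasDerivAt (fun s : ℝ => exp (-(s • A)) * C * exp (-(s • A)))
      (-(A * (exp (-(t • A)) * C * exp (-(t • A))) +
         (exp (-(t • A)) * C * exp (-(t • A))) * A)) t := by
  letI : CompleteSpace (Matrix (Fin m) (Fin m) ℂ) := FiniteDimensional.complete ℝ _
  have key : ∀ s : ℝ, -(s • A) = s • (-A) := fun s => (smul_neg s A).symm
  simp only [key]
  have hg : HasDerivAt (fun u : ℝ => exp (u • (-A))) (exp (t • (-A)) * (-A)) t := by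
    have h := hasDerivAt_exp_smul_const (𝕂 := ℝ) (-A) t
    exact h
  have hcomm : Commute A (exp (t • (-A))) :=
    (((Commute.refl A).neg_right).smul_right t).exp_right
  have hF := (hg.mul_const C).mul hg
  refine hF.congr_deriv ?_
  simp only [mul_neg, neg_mul, neg_add, ← mul_assoc]
  rw [hcomm.eq]

theorem hasDerivAt_F_entry (A C : Matrix (Fin m) (Fin m) ℂ) (t : ℝ) (i j : Fin m) :
    HasDerivAt (fun s : ℝ => (exp (-(s • A)) * C * exp (-(s • A))) i j)
      ((-(A * (exp (-(t • A)) * C * exp (-(t • A))) +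
         (exp (-(t • A)) * C * exp (-(t • A))) * A)) i j) t := by
  let L0 : Matrix (Fin m) (Fin m) ℂ →ₗ[ℝ] ℂ :=
    { toFun := fun X => X i j
      map_add' := fun X Y => rfl
      map_smul' := fun c X => rfl }
  let L : Matrix (Fin m) (Fin m) ℂ →L[ℝ] ℂ := LinearMap.toContinuousLinearMap L0
  have h := L.hasFDerivAt.comp_hasDerivAt t (hasDerivAt_F A C t)
  exact h

theorem F_entry_bound (A : Matrix (Fin m) (Fin m) ℂ) (hA : A.PosDef)
    (C : Matrix (Fin m) (Fin m) ℂ) :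
    ∃ δ : ℝ, 0 < δ ∧ ∃ M : ℝ, ∀ i j : Fin m, ∀ t : ℝ, 0 ≤ t →
      ‖(exp (-(t • A)) * C * exp (-(t • A))) i j‖ ≤ M * Real.exp (-(δ * t)) := by
  obtain ⟨δ, hδ, K, hK0, hK⟩ := entry_bound A hA
  refine ⟨δ, hδ, (∑ l, ∑ k, ‖C k l‖) * (K * K), fun i j t ht => ?_⟩
  set e := Real.exp (-(δ * t)) with he
  have he0 : 0 ≤ e := Real.exp_nonneg _
  have he1 : e ≤ 1 := Real.exp_le_one_iff.2 (by nlinarith)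
  set E := exp (-(t • A)) with hE
  calc ‖(E * C * E) i j‖ = ‖∑ l, (∑ k, E i k * C k l) * E l j‖ := by
        rw [Matrix.mul_apply]
        simp_rw [Matrix.mul_apply]
    _ ≤ ∑ l, ‖(∑ k, E i k * C k l) * E l j‖ := norm_sum_le _ _
    _ ≤ ∑ l, ∑ k, ‖E i k‖ * ‖C k l‖ * ‖E l j‖ := by
        refine Finset.sum_le_sum fun l _ => ?_
        rw [norm_mul, ← Finset.sum_mul]
        refine mul_le_mul_of_nonneg_right ?_ (norm_nonneg _)
        refine (norm_sum_le _ _).trans (Finset.sum_le_sum fun k _ => ?_)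
        rw [norm_mul]
    _ ≤ ∑ l, ∑ k, ‖C k l‖ * (K * K * e) := by
        refine Finset.sum_le_sum fun l _ => Finset.sum_le_sum fun k _ => ?_
        have b1 : ‖E i k‖ ≤ K * e := hK i k t ht
        have b2 : ‖E l j‖ ≤ K := (hK l j t ht).trans (by nlinarith)
        calc ‖E i k‖ * ‖C k l‖ * ‖E l j‖ ≤ (K * e) * ‖C k l‖ * K := by
              refine mul_le_mul (mul_le_mul_of_nonneg_right b1 (norm_nonneg _)) b2
                (norm_nonneg _) ?_
              positivity
          _ = ‖C k l‖ * (K * K * e) := by ring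
    _ = (∑ l, ∑ k, ‖C k l‖) * (K * K) * e := by
        simp_rw [← Finset.sum_mul]
        ring

theorem F_entry_integrableOn (A : Matrix (Fin m) (Fin m) ℂ) (hA : A.PosDef)
    (C : Matrix (Fin m) (Fin m) ℂ) (i j : Fin m) :
    IntegrableOn (fun t : ℝ => (exp (-(t • A)) * C * exp (-(t • A))) i j)
      (Ioi (0 : ℝ)) := by
  obtain ⟨δ, hδ, M, hM⟩ := F_entry_bound A hA C
  have hcont : Continuous fun t : ℝ => (exp (-(t • A)) * C * exp (-(t • A))) i j :=
    continuous_iff_continuousAt.2 fun t => (hasDerivAt_F_entry A C t i j).continuousAt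
  have hg : IntegrableOn (fun t : ℝ => M * Real.exp (-(δ * t))) (Ioi (0 : ℝ)) := by
    have := (exp_neg_integrableOn_Ioi 0 hδ).const_mul M
    simpa [neg_mul, IntegrableOn] using this
  refine Integrable.mono' hg (hcont.aestronglyMeasurable.restrict) ?_
  refine (ae_restrict_iff' measurableSet_Ioi).2 (ae_of_all _ fun t ht => ?_)
  exact hM i j t (le_of_lt ht)

theorem key_integral (A : Matrix (Fin m) (Fin m) ℂ) (hA : A.PosDef)
    (C : Matrix (Fin m) (Fin m) ℂ) (i j : Fin m) :
    ∫ t in Ioi (0 : ℝ),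
      (A * (exp (-(t • A)) * C * exp (-(t • A))) +
        (exp (-(t • A)) * C * exp (-(t • A))) * A) i j = C i j := by
  set F : ℝ → Matrix (Fin m) (Fin m) ℂ :=
    fun t => exp (-(t • A)) * C * exp (-(t • A)) with hF
  set f : ℝ → ℂ := fun t => (F t) i j with hf
  obtain ⟨δ, hδ, M, hM⟩ := F_entry_bound A hA C
  -- integrability of the integrand
  have hint : ∀ i' j' : Fin m, IntegrableOn (fun t : ℝ => (F t) i' j') (Ioi (0 : ℝ)) :=
    fun i' j' => F_entry_integrableOn A hA C i' j'
  have hintA : IntegrableOn (fun t : ℝ => (A * F t) i j) (Ioi (0 : ℝ)) := by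
    have : (fun t : ℝ => (A * F t) i j) = fun t : ℝ => ∑ k, A i k * (F t) k j := by
      funext t; rw [Matrix.mul_apply]
    rw [this]
    exact integrable_finset_sum _ fun k _ => (hint k j).const_mul _
  have hintA' : IntegrableOn (fun t : ℝ => (F t * A) i j) (Ioi (0 : ℝ)) := by
    have : (fun t : ℝ => (F t * A) i j) = fun t : ℝ => ∑ k, (F t) i k * A k j := by
      funext t; rw [Matrix.mul_apply]
    rw [this]
    exact integrable_finset_sum _ fun k _ => (hint i k).mul_const _
  have hintphi : IntegrableOn (fun t : ℝ => (A * F t + F t * A) i j) (Ioi (0 : ℝ)) := by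
    have : (fun t : ℝ => (A * F t + F t * A) i j)
        = fun t : ℝ => (A * F t) i j + (F t * A) i j := by
      funext t; rw [Matrix.add_apply]
    rw [this]
    exact hintA.add hintA'
  -- derivative
  have hderiv : ∀ t ∈ Ioi (0 : ℝ), HasDerivAt f (-((A * F t + F t * A) i j)) t := by
    intro t _
    have := hasDerivAt_F_entry A C t i j
    simpa [Matrix.neg_apply] using this
  have hcont : ContinuousWithinAt f (Ici (0 : ℝ)) 0 :=
    (hasDerivAt_F_entry A C 0 i j).continuousAt.continuousWithinAt
  -- tendsto 0
  have htends : Tendsto f atTop (𝓝 (0 : ℂ)) := by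
    have hexp : Tendsto (fun t : ℝ => M * Real.exp (-(δ * t))) atTop (𝓝 (0 : ℝ)) := by
      have h1 : Tendsto (fun t : ℝ => δ * t) atTop atTop :=
        Tendsto.const_mul_atTop hδ tendsto_id
      have h2 : Tendsto (fun t : ℝ => -(δ * t)) atTop atBot := tendsto_neg_atBot_iff.2 h1
      have h3 := Real.tendsto_exp_atBot.comp h2
      simpa using h3.const_mul M
    refine squeeze_zero_norm' ?_ hexp
    filter_upwards [eventually_ge_atTop (0 : ℝ)] with t ht
    exact hM i j t ht
  have hFTC := integral_Ioi_of_hasDerivAt_of_tendsto hcont hderiv hintphi.neg htends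
  have hf0 : f 0 = C i j := by
    simp [hf, hF]
  rw [hf0, zero_sub] at hFTC
  have : ∫ t in Ioi (0 : ℝ), -((A * F t + F t * A) i j) =
      -∫ t in Ioi (0 : ℝ), (A * F t + F t * A) i j := integral_neg _
  rw [this] at hFTC
  exact neg_injective hFTC

/-- For a positive definite Hermitian matrix `A`, the Sylvester equation `A * X + X * A = B`
has a unique solution, given (entrywise) by `X = ∫_0^∞ e^{-tA} B e^{-tA} dt`. -/
theorem sylvester_equation_unique_solution (m : ℕ) (A B : Matrix (Fin m) (Fin m) ℂ)
    (hA : A.PosDef) :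
    letI X₀ : Matrix (Fin m) (Fin m) ℂ :=
      Matrix.of fun i j =>
        ∫ t in Set.Ioi (0 : ℝ),
          (NormedSpace.exp (-(t • A)) * B * NormedSpace.exp (-(t • A))) i j
    A * X₀ + X₀ * A = B ∧ ∀ X : Matrix (Fin m) (Fin m) ℂ, A * X + X * A = B → X = X₀ := by
  set X₀ : Matrix (Fin m) (Fin m) ℂ :=
    Matrix.of fun i j =>
      ∫ t in Set.Ioi (0 : ℝ),
        (NormedSpace.exp (-(t • A)) * B * NormedSpace.exp (-(t • A))) i j with hX₀
  show A * X₀ + X₀ * A = B ∧ ∀ X : Matrix (Fin m) (Fin m) ℂ, A * X + X * A = B → X = X₀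
  set F : ℝ → Matrix (Fin m) (Fin m) ℂ :=
    fun t => exp (-(t • A)) * B * exp (-(t • A)) with hF
  have hint : ∀ i j : Fin m, IntegrableOn (fun t : ℝ => (F t) i j) (Ioi (0 : ℝ)) :=
    fun i j => F_entry_integrableOn A hA B i j
  have hX₀app : ∀ i j : Fin m, X₀ i j = ∫ t in Ioi (0 : ℝ), (F t) i j := fun i j => rfl
  constructor
  · ext i j
    have h1 : (A * X₀) i j = ∫ t in Ioi (0 : ℝ), (A * F t) i j := by
      rw [Matrix.mul_apply]
      have : (fun t : ℝ => (A * F t) i j) = fun t : ℝ => ∑ k, A i k * (F t) k j := by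
        funext t; rw [Matrix.mul_apply]
      rw [this, integral_finset_sum _ fun k _ => (hint k j).const_mul _]
      refine Finset.sum_congr rfl fun k _ => ?_
      rw [hX₀app k j, integral_const_mul]
    have h2 : (X₀ * A) i j = ∫ t in Ioi (0 : ℝ), (F t * A) i j := by
      rw [Matrix.mul_apply]
      have : (fun t : ℝ => (F t * A) i j) = fun t : ℝ => ∑ k, (F t) i k * A k j := by
        funext t; rw [Matrix.mul_apply]
      rw [this, integral_finset_sum _ fun k _ => (hint i k).mul_const _]
      refine Finset.sum_congr rfl fun k _ => ?_
      rw [hX₀app i k, integral_mul_const]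
    have hintA : IntegrableOn (fun t : ℝ => (A * F t) i j) (Ioi (0 : ℝ)) := by
      have : (fun t : ℝ => (A * F t) i j) = fun t : ℝ => ∑ k, A i k * (F t) k j := by
        funext t; rw [Matrix.mul_apply]
      rw [this]
      exact integrable_finset_sum _ fun k _ => (hint k j).const_mul _
    have hintA' : IntegrableOn (fun t : ℝ => (F t * A) i j) (Ioi (0 : ℝ)) := by
      have : (fun t : ℝ => (F t * A) i j) = fun t : ℝ => ∑ k, (F t) i k * A k j := by
        funext t; rw [Matrix.mul_apply]
      rw [this]
      exact integrable_finset_sum _ fun k _ => (hint i k).mul_const _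
    rw [Matrix.add_apply, h1, h2, ← integral_add hintA hintA']
    have : (fun t : ℝ => (A * F t) i j + (F t * A) i j)
        = fun t : ℝ => (A * F t + F t * A) i j := by
      funext t; rw [Matrix.add_apply]
    rw [this]
    exact key_integral A hA B i j
  · intro X hX
    ext i j
    have hEcomm : ∀ t : ℝ, A * exp (-(t • A)) = exp (-(t • A)) * A := fun t =>
      ((((Commute.refl A).smul_right t).neg_right).exp_right).eq
    have hFB : ∀ t : ℝ, F t =
        A * (exp (-(t • A)) * X * exp (-(t • A))) +
          (exp (-(t • A)) * X * exp (-(t • A))) * A := by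
      intro t
      set E := exp (-(t • A)) with hE
      have h := hEcomm t
      calc F t = E * (A * X + X * A) * E := by rw [hF]; rw [hX]
        _ = (E * A) * (X * E) + (E * X) * (A * E) := by noncomm_ring
        _ = (A * E) * (X * E) + (E * X) * (E * A) := by rw [h]
        _ = A * (E * X * E) + (E * X * E) * A := by noncomm_ring
    have : X₀ i j = ∫ t in Ioi (0 : ℝ),
        (A * (exp (-(t • A)) * X * exp (-(t • A))) +
          (exp (-(t • A)) * X * exp (-(t • A))) * A) i j := by
      rw [hX₀app i j]
      congr 1
      funext t
      rw [hFB t]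
    rw [this, key_integral A hA X i j]
end

section
/- Let τ be a Hermitian trace-1 matrix in M_m ⊗ M_n and set ρ_A = Tr_B[τ]. Assume ρ_A is positive definite. Then there exists a unique Hermitian-preserving trace-preserving linear map E : M_m → M_n such that τ = (1/2){ρ_A ⊗ 1_n, J[E]}, where J[E] = Σ_{i,j} |i⟩⟨j| ⊗ E(|j⟩⟨i|) is the Jamiołkowski matrix of E and {·,·} is the anticommutator. -/
open Matrix Kronecker
open scoped ComplexOrder

lemma sylvester_existsUnique {N : Type*} [Fintype N] [DecidableEq N]
    (ρ : Matrix N N ℂ) (hρ : ρ.PosDef) (C : Matrix N N ℂ) :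
    ∃! X : Matrix N N ℂ, ρ * X + X * ρ = C := by
  classical
  set U : Matrix N N ℂ := (hρ.1.eigenvectorUnitary : Matrix N N ℂ) with hU
  set D : Matrix N N ℂ := diagonal (RCLike.ofReal ∘ hρ.1.eigenvalues) with hD
  have hspec : ρ = U * D * star U := hρ.1.spectral_theorem
  have h2 : U * star U = 1 := (Matrix.mem_unitaryGroup_iff).mp hρ.1.eigenvectorUnitary.2
  have h1 : star U * U = 1 := (Matrix.mem_unitaryGroup_iff').mp hρ.1.eigenvectorUnitary.2
  have h1' : ∀ Z : Matrix N N ℂ, star U * (U * Z) = Z := fun Z => by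
    rw [← Matrix.mul_assoc, h1, Matrix.one_mul]
  have hd : ∀ i j, (RCLike.ofReal (hρ.1.eigenvalues i) : ℂ)
      + RCLike.ofReal (hρ.1.eigenvalues j) ≠ 0 := by
    intro i j
    have hpos : (0:ℝ) < hρ.1.eigenvalues i + hρ.1.eigenvalues j :=
      add_pos (hρ.eigenvalues_pos i) (hρ.eigenvalues_pos j)
    have : ((hρ.1.eigenvalues i + hρ.1.eigenvalues j : ℝ) : ℂ) ≠ 0 := by
      exact_mod_cast hpos.ne'
    simpa using this
  have key : ∀ Y : Matrix N N ℂ, ρ * (U * Y * star U) + (U * Y * star U) * ρ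
      = U * (D * Y + Y * D) * star U := by
    intro Y
    rw [hspec]
    simp only [Matrix.mul_add, Matrix.add_mul, Matrix.mul_assoc, h1']
  have w : ∀ X : Matrix N N ℂ, X = U * (star U * X * U) * star U := by
    intro X
    simp only [← Matrix.mul_assoc]
    rw [h2, Matrix.one_mul, Matrix.mul_assoc, h2, Matrix.mul_one]
  have conj : ∀ M : Matrix N N ℂ, star U * (U * M * star U) * U = M := by
    intro M
    simp only [← Matrix.mul_assoc]
    rw [h1, Matrix.one_mul, Matrix.mul_assoc, h1, Matrix.mul_one]
  have hsolve : ∀ a b c : ℂ, a + b ≠ 0 → a * (c / (a + b)) + c / (a + b) * b = c := by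
    intro a b c h
    field_simp
  set Y0 : Matrix N N ℂ := Matrix.of fun i j => (star U * C * U) i j /
      ((RCLike.ofReal (hρ.1.eigenvalues i) : ℂ) + RCLike.ofReal (hρ.1.eigenvalues j)) with hY0
  set X0 : Matrix N N ℂ := U * Y0 * star U with hX0def
  have hX0 : ρ * X0 + X0 * ρ = C := by
    rw [hX0def, key]
    have hmid : D * Y0 + Y0 * D = star U * C * U := by
      ext i j
      simp only [Matrix.add_apply, hD, Matrix.diagonal_mul, Matrix.mul_diagonal,
        hY0, Matrix.of_apply, Function.comp_apply]
      exact hsolve _ _ _ (hd i j)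
    rw [hmid]
    calc U * (star U * C * U) * star U = U * star U * C * (U * star U) := by
          simp only [Matrix.mul_assoc]
      _ = C := by rw [h2, Matrix.one_mul, Matrix.mul_one]
  refine ⟨X0, hX0, ?_⟩
  intro X hX
  have hz : ρ * (X - X0) + (X - X0) * ρ = 0 := by
    rw [Matrix.mul_sub, Matrix.sub_mul, sub_add_sub_comm, hX, hX0, sub_self]
  set Y : Matrix N N ℂ := star U * (X - X0) * U with hY
  have hk := key Y
  rw [← w (X - X0)] at hk
  have hz2 : U * (D * Y + Y * D) * star U = 0 := hk ▸ hz
  have hYz : D * Y + Y * D = 0 := by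
    have := congrArg (fun M => star U * M * U) hz2
    simpa only [conj, Matrix.mul_zero, Matrix.zero_mul] using this
  have hYzero : Y = 0 := by
    ext i j
    have h3 := congrFun (congrFun hYz i) j
    simp only [Matrix.add_apply, hD, Matrix.diagonal_mul, Matrix.mul_diagonal,
      Function.comp_apply, Matrix.zero_apply] at h3
    have h4 : ((RCLike.ofReal (hρ.1.eigenvalues i) : ℂ) + RCLike.ofReal (hρ.1.eigenvalues j))
        * Y i j = 0 := by rw [hY]; linear_combination h3
    have := (mul_eq_zero.mp h4).resolve_left (hd i j)
    simpa [hY] using this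
  have hX0eq : X - X0 = 0 := by
    have := congrArg (fun M => U * M * star U) hYzero
    simp only [Matrix.mul_zero, Matrix.zero_mul] at this
    rw [w (X - X0), ← hY, this]
  exact sub_eq_zero.mp hX0eq

lemma kron_one_posDef {m n : ℕ} {A : Matrix (Fin m) (Fin m) ℂ} (hA : A.PosDef) :
    (A ⊗ₖ (1 : Matrix (Fin n) (Fin n) ℂ)).PosDef := by
  refine Matrix.PosDef.of_dotProduct_mulVec_pos ?_ ?_
  · ext ⟨i, k⟩ ⟨j, l⟩
    simp only [conjTranspose_apply, kroneckerMap_apply, Matrix.one_apply, star_mul',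
      apply_ite (star : ℂ → ℂ), star_one, star_zero, hA.1.apply]
    simp [eq_comm]
  · intro x hx
    have key : star x ⬝ᵥ (A ⊗ₖ (1 : Matrix (Fin n) (Fin n) ℂ)) *ᵥ x
        = ∑ k : Fin n, star (fun i => x (i, k)) ⬝ᵥ A *ᵥ (fun i => x (i, k)) := by
      simp only [dotProduct, mulVec, kroneckerMap_apply, Matrix.one_apply, Pi.star_apply,
        Fintype.sum_prod_type, mul_ite, ite_mul, mul_one, mul_zero, zero_mul,
        Finset.sum_ite_eq, Finset.mem_univ, if_true]
      rw [Finset.sum_comm]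
    rw [key]
    obtain ⟨⟨i0, k0⟩, hi0⟩ : ∃ p, x p ≠ 0 := by
      by_contra h
      push_neg at h
      exact hx (funext h)
    refine Finset.sum_pos' (fun k _ => hA.posSemidef.dotProduct_mulVec_nonneg _) ⟨k0, Finset.mem_univ _, ?_⟩
    exact hA.dotProduct_mulVec_pos (fun h => hi0 (congrFun h i0))

/-- For a Hermitian trace-1 matrix `τ ∈ M_m ⊗ M_n` whose first marginal
`ρ_A = Tr_B[τ]` is positive definite, there is a unique Hermitian-preserving
trace-preserving linear map `E : M_m → M_n` such that
`τ = (1/2){ρ_A ⊗ 1, J[E]}`, where `J[E] = Σ_{i,j} |i⟩⟨j| ⊗ E(|j⟩⟨i|)` is the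
Jamiołkowski matrix of `E` in the standard basis and `{·,·}` is the anticommutator. -/
theorem exists_unique_HPTP_state_over_time (m n : ℕ)
    (τ : Matrix (Fin m × Fin n) (Fin m × Fin n) ℂ)
    (hherm : τ.IsHermitian) (htr : τ.trace = 1)
    (hρA : (Matrix.of fun i j : Fin m => ∑ k, τ (i, k) (j, k)).PosDef) :
    letI ρA : Matrix (Fin m) (Fin m) ℂ := Matrix.of fun i j => ∑ k, τ (i, k) (j, k)
    ∃! E : Matrix (Fin m) (Fin m) ℂ →ₗ[ℂ] Matrix (Fin n) (Fin n) ℂ,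
      (∀ A, E Aᴴ = (E A)ᴴ) ∧ (∀ A, (E A).trace = A.trace) ∧
      τ = (1 / 2 : ℂ) •
        ((ρA ⊗ₖ (1 : Matrix (Fin n) (Fin n) ℂ)) *
            (Matrix.of fun p q : Fin m × Fin n =>
              E (Matrix.single q.1 p.1 (1 : ℂ)) p.2 q.2) +
          (Matrix.of fun p q : Fin m × Fin n =>
              E (Matrix.single q.1 p.1 (1 : ℂ)) p.2 q.2) *
            (ρA ⊗ₖ (1 : Matrix (Fin n) (Fin n) ℂ))) := by
  classical
  set ρA : Matrix (Fin m) (Fin m) ℂ := Matrix.of fun i j => ∑ k, τ (i, k) (j, k) with hρAdef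
  set ρ : Matrix (Fin m × Fin n) (Fin m × Fin n) ℂ := ρA ⊗ₖ (1 : Matrix (Fin n) (Fin n) ℂ)
    with hρdef
  have hρ : ρ.PosDef := kron_one_posDef hρA
  obtain ⟨J, hJ, hJuniq⟩ := sylvester_existsUnique ρ hρ ((2 : ℂ) • τ)
  -- J is Hermitian
  have hJh : Jᴴ = J := by
    refine hJuniq Jᴴ ?_
    have h5 : ρ * Jᴴ + Jᴴ * ρ = (ρ * J + J * ρ)ᴴ := by
      rw [conjTranspose_add, conjTranspose_mul, conjTranspose_mul, hρ.1, add_comm]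
    show ρ * Jᴴ + Jᴴ * ρ = (2 : ℂ) • τ
    rw [h5, hJ, conjTranspose_smul]
    rw [hherm.eq]
    norm_num
  -- partial trace of J is 1
  set X : Matrix (Fin m) (Fin m) ℂ := Matrix.of fun i j => ∑ k, J (i, k) (j, k) with hXdef
  have hXeq : ρA * X + X * ρA = (2 : ℂ) • ρA := by
    ext i j
    have hsum : ∀ k : Fin n, (ρ * J + J * ρ) (i, k) (j, k) = ((2:ℂ) • τ) (i, k) (j, k) :=
      fun k => by rw [hJ]
    have lhs1 : ∀ k, (ρ * J) (i, k) (j, k) = ∑ a, ρA i a * J (a, k) (j, k) := by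
      intro k
      simp only [Matrix.mul_apply, hρdef, kroneckerMap_apply, Matrix.one_apply,
        Fintype.sum_prod_type, mul_ite, ite_mul, mul_one, mul_zero, zero_mul,
        Finset.sum_ite_eq, Finset.mem_univ, if_true]
    have lhs2 : ∀ k, (J * ρ) (i, k) (j, k) = ∑ a, J (i, k) (a, k) * ρA a j := by
      intro k
      simp only [Matrix.mul_apply, hρdef, kroneckerMap_apply, Matrix.one_apply,
        Fintype.sum_prod_type, mul_ite, ite_mul, mul_one, mul_zero, zero_mul,
        Finset.sum_ite_eq', Finset.mem_univ, if_true]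
    calc (ρA * X + X * ρA) i j
        = ∑ k, ((ρ * J) (i, k) (j, k) + (J * ρ) (i, k) (j, k)) := by
          have e1 : ∑ k, ∑ a, ρA i a * J (a, k) (j, k) = (ρA * X) i j := by
            rw [Finset.sum_comm]
            simp [Matrix.mul_apply, hXdef, Finset.mul_sum]
          have e2 : ∑ k, ∑ a, J (i, k) (a, k) * ρA a j = (X * ρA) i j := by
            rw [Finset.sum_comm]
            simp [Matrix.mul_apply, hXdef, Finset.sum_mul]
          simp only [Matrix.add_apply, lhs1, lhs2, Finset.sum_add_distrib, e1, e2]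
      _ = ∑ k, ((2:ℂ) • τ) (i, k) (j, k) := by
          refine Finset.sum_congr rfl fun k _ => ?_
          have := hsum k
          simpa [Matrix.add_apply] using this
      _ = ((2:ℂ) • ρA) i j := by
          simp only [Matrix.smul_apply, smul_eq_mul]
          rw [← Finset.mul_sum]
          rfl
  have hX1 : X = 1 := by
    obtain ⟨W, hW, hWuniq⟩ := sylvester_existsUnique ρA hρA ((2 : ℂ) • ρA)
    rw [hWuniq X hXeq, hWuniq 1 (show ρA * 1 + 1 * ρA = (2 : ℂ) • ρA by
      rw [Matrix.mul_one, Matrix.one_mul, two_smul])]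
  -- the linear map E
  set E : Matrix (Fin m) (Fin m) ℂ →ₗ[ℂ] Matrix (Fin n) (Fin n) ℂ :=
    { toFun := fun A => Matrix.of fun k l => ∑ i, ∑ j, A j i * J (i, k) (j, l)
      map_add' := by
        intro A B
        ext k l
        simp [add_mul, Finset.sum_add_distrib]
      map_smul' := by
        intro c A
        ext k l
        simp [Finset.mul_sum, mul_assoc] } with hE
  have hEapp : ∀ A k l, E A k l = ∑ i, ∑ j, A j i * J (i, k) (j, l) := fun A k l => rfl
  have hJE : (Matrix.of fun p q : Fin m × Fin n =>
      E (Matrix.single q.1 p.1 (1 : ℂ)) p.2 q.2) = J := by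
    ext ⟨p1, p2⟩ ⟨q1, q2⟩
    simp only [Matrix.of_apply, hEapp, Matrix.single, ite_mul, one_mul, zero_mul]
    rw [Finset.sum_comm]
    simp [ite_and, Finset.sum_ite_eq, Finset.sum_ite_eq']
  refine ⟨E, ⟨?_, ?_, ?_⟩, ?_⟩
  · -- Hermitian preserving
    intro A
    ext k l
    rw [conjTranspose_apply, hEapp, hEapp]
    simp only [star_sum, star_mul', conjTranspose_apply]
    conv_rhs => rw [Finset.sum_comm]
    refine Finset.sum_congr rfl fun i _ => Finset.sum_congr rfl fun j _ => ?_
    have hstar : star (J (j, l) (i, k)) = J (i, k) (j, l) := by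
      rw [← Matrix.conjTranspose_apply, hJh]
    rw [hstar]
  · -- trace preserving
    intro A
    have : (E A).trace = ∑ i, ∑ j, A j i * X i j := by
      simp only [Matrix.trace, Matrix.diag, hEapp, hXdef, Matrix.of_apply, Finset.mul_sum]
      rw [Finset.sum_comm]
      refine Finset.sum_congr rfl fun i _ => ?_
      rw [Finset.sum_comm]
    rw [this, hX1]
    simp [Matrix.one_apply, Matrix.trace, Matrix.diag]
  · -- the state over time equation
    rw [hJE, hJ, smul_smul]
    norm_num
  · -- uniqueness
    rintro E' ⟨hp', htp', heq'⟩
    set J' : Matrix (Fin m × Fin n) (Fin m × Fin n) ℂ := Matrix.of fun p q : Fin m × Fin n =>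
      E' (Matrix.single q.1 p.1 (1 : ℂ)) p.2 q.2 with hJ'def
    have hJ'eq : ρ * J' + J' * ρ = (2 : ℂ) • τ := by
      rw [heq', smul_smul]
      norm_num
    have hJJ' : J' = J := hJuniq J' hJ'eq
    have hbasis : ∀ a b, E' (Matrix.single a b (1:ℂ)) = E (Matrix.single a b 1) := by
      intro a b
      ext k l
      have h1 := congrFun (congrFun hJJ' (b, k)) (a, l)
      have h2 := congrFun (congrFun hJE (b, k)) (a, l)
      simp only [hJ'def, Matrix.of_apply] at h1
      simp only [Matrix.of_apply] at h2
      exact h1.trans h2.symm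
    refine LinearMap.ext fun A => ?_
    conv_lhs => rw [matrix_eq_sum_single A]
    conv_rhs => rw [matrix_eq_sum_single A]
    simp only [map_sum]
    refine Finset.sum_congr rfl fun a _ => Finset.sum_congr rfl fun b _ => ?_
    have hsb : Matrix.single a b (A a b) = (A a b) • Matrix.single a b 1 := by
      rw [Matrix.smul_single, smul_eq_mul, mul_one]
    rw [hsb, LinearMap.map_smul, LinearMap.map_smul, hbasis]
end

section
/- Let τ be a Hermitian trace-1 matrix in M_m ⊗ M_n with ρ_A = Tr_B[τ] positive definite, and let {|i⟩} be an orthonormal eigenbasis of ρ_A with eigenvalues p_i. Then the unique HPTP map E satisfying τ = (1/2){ρ_A ⊗ 1, J[E]} is given by E(|i⟩⟨j|) = (2/(p_i + p_j)) Tr_A[τ (|i⟩⟨j| ⊗ 1_n)]. -/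
open Matrix Kronecker
open scoped ComplexOrder

namespace TCF
variable {m n : ℕ}

/-- Partial trace over the first tensor factor. -/
noncomputable def ptrA (M : Matrix (Fin m × Fin n) (Fin m × Fin n) ℂ) :
    Matrix (Fin n) (Fin n) ℂ :=
  Matrix.of fun k l => ∑ a, M (a, k) (a, l)

lemma ptrA_add (M N : Matrix (Fin m × Fin n) (Fin m × Fin n) ℂ) :
    ptrA (M + N) = ptrA M + ptrA N := by
  ext k l; simp [ptrA, Finset.sum_add_distrib]

lemma ptrA_smul (c : ℂ) (M : Matrix (Fin m × Fin n) (Fin m × Fin n) ℂ) :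
    ptrA (c • M) = c • ptrA M := by
  ext k l; simp [ptrA, Finset.mul_sum]

lemma ptrA_comm (A : Matrix (Fin m) (Fin m) ℂ)
    (M : Matrix (Fin m × Fin n) (Fin m × Fin n) ℂ) :
    ptrA ((A ⊗ₖ (1 : Matrix (Fin n) (Fin n) ℂ)) * M) = ptrA (M * (A ⊗ₖ 1)) := by
  ext k l
  simp only [ptrA, Matrix.of_apply, Matrix.mul_apply, Fintype.sum_prod_type,
    Matrix.kroneckerMap_apply, Matrix.one_apply, mul_ite, mul_one, mul_zero,
    ite_mul, one_mul, zero_mul, Finset.sum_ite_eq, Finset.sum_ite_eq',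
    Finset.mem_univ, if_true]
  rw [Finset.sum_comm]
  exact Finset.sum_congr rfl fun a _ => Finset.sum_congr rfl fun b _ => mul_comm _ _

lemma E_eq (E : Matrix (Fin m) (Fin m) ℂ →ₗ[ℂ] Matrix (Fin n) (Fin n) ℂ)
    (X : Matrix (Fin m) (Fin m) ℂ) :
    E X = ptrA ((Matrix.of fun pq qq : Fin m × Fin n =>
        E (Matrix.single qq.1 pq.1 (1 : ℂ)) pq.2 qq.2) * (X ⊗ₖ 1)) := by
  conv_lhs => rw [Matrix.matrix_eq_sum_single X]
  rw [map_sum]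
  ext k l
  simp only [ptrA, Matrix.of_apply, Matrix.mul_apply, Fintype.sum_prod_type,
    Matrix.kroneckerMap_apply, Matrix.one_apply, mul_ite, mul_one, mul_zero,
    Finset.sum_ite_eq', Finset.mem_univ, if_true, Matrix.sum_apply, map_sum]
  rw [Finset.sum_comm]
  refine Finset.sum_congr rfl fun a _ => Finset.sum_congr rfl fun b _ => ?_
  have h1 : Matrix.single b a (X b a) = X b a • Matrix.single b a (1 : ℂ) := by
    rw [Matrix.smul_single, smul_eq_mul, mul_one]
  rw [h1, LinearMap.map_smul, Matrix.smul_apply, smul_eq_mul, mul_comm]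

lemma mul_vecMulVec' (A : Matrix (Fin m) (Fin m) ℂ) (u v : Fin m → ℂ) :
    A * Matrix.vecMulVec u v = Matrix.vecMulVec (A.mulVec u) v := by
  ext a b
  simp [Matrix.mul_apply, Matrix.vecMulVec_apply, Matrix.mulVec, dotProduct,
    Finset.sum_mul, mul_assoc]

lemma vecMulVec_mul' (A : Matrix (Fin m) (Fin m) ℂ) (u v : Fin m → ℂ) :
    Matrix.vecMulVec u v * A = Matrix.vecMulVec u (Matrix.vecMul v A) := by
  ext a b
  simp [Matrix.mul_apply, Matrix.vecMulVec_apply, Matrix.vecMul, dotProduct,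
    Finset.mul_sum, mul_assoc]

end TCF

/-- Let `τ ∈ M_m ⊗ M_n` be Hermitian with trace 1, with positive definite first marginal
`ρ_A = Tr_B[τ]`, and let `{e i}` be an orthonormal eigenbasis of `ρ_A` with (positive)
eigenvalues `p i`.  Then any HPTP linear map `E` satisfying `τ = (1/2){ρ_A ⊗ 1, J[E]}`
is given by `E(|i⟩⟨j|) = (2/(p i + p j)) • Tr_A[τ (|i⟩⟨j| ⊗ 1)]`. -/
theorem temporal_channel_formula (m n : ℕ)
    (τ : Matrix (Fin m × Fin n) (Fin m × Fin n) ℂ)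
    (hherm : τ.IsHermitian) (htr : τ.trace = 1)
    (e : Fin m → (Fin m → ℂ)) (p : Fin m → ℝ)
    (horth : ∀ i j, star (e i) ⬝ᵥ e j = if i = j then (1 : ℂ) else 0)
    (heig : ∀ i, (Matrix.of fun i j : Fin m => ∑ k, τ (i, k) (j, k)).mulVec (e i)
        = (p i : ℂ) • e i)
    (hp : ∀ i, 0 < p i)
    (hρA : (Matrix.of fun i j : Fin m => ∑ k, τ (i, k) (j, k)).PosDef)
    (E : Matrix (Fin m) (Fin m) ℂ →ₗ[ℂ] Matrix (Fin n) (Fin n) ℂ)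
    (hHP : ∀ A, E Aᴴ = (E A)ᴴ) (hTP : ∀ A, (E A).trace = A.trace)
    (hE : τ = (1 / 2 : ℂ) •
        (((Matrix.of fun i j : Fin m => ∑ k, τ (i, k) (j, k)) ⊗ₖ
              (1 : Matrix (Fin n) (Fin n) ℂ)) *
            (Matrix.of fun pq qq : Fin m × Fin n =>
              E (Matrix.single qq.1 pq.1 (1 : ℂ)) pq.2 qq.2) +
          (Matrix.of fun pq qq : Fin m × Fin n =>
              E (Matrix.single qq.1 pq.1 (1 : ℂ)) pq.2 qq.2) *
            ((Matrix.of fun i j : Fin m => ∑ k, τ (i, k) (j, k)) ⊗ₖ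
              (1 : Matrix (Fin n) (Fin n) ℂ)))) :
    ∀ i j : Fin m,
      E (Matrix.vecMulVec (e i) (star (e j))) =
        (2 / ((p i : ℂ) + (p j : ℂ))) •
          (Matrix.of fun k l : Fin n => ∑ a,
            (τ * (Matrix.vecMulVec (e i) (star (e j)) ⊗ₖ
                (1 : Matrix (Fin n) (Fin n) ℂ))) (a, k) (a, l)) := by
  intro i j
  set ρ : Matrix (Fin m) (Fin m) ℂ :=
    Matrix.of fun i j : Fin m => ∑ k, τ (i, k) (j, k) with hρdef
  set J : Matrix (Fin m × Fin n) (Fin m × Fin n) ℂ :=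
    Matrix.of fun pq qq : Fin m × Fin n =>
      E (Matrix.single qq.1 pq.1 (1 : ℂ)) pq.2 qq.2 with hJdef
  set X : Matrix (Fin m) (Fin m) ℂ := Matrix.vecMulVec (e i) (star (e j)) with hXdef
  -- ρ * X = p i • X
  have hρX : ρ * X = (p i : ℂ) • X := by
    rw [hXdef, TCF.mul_vecMulVec', heig i]
    ext a b
    simp [Matrix.vecMulVec_apply, mul_assoc]
  -- X * ρ = p j • X
  have hXρ : X * ρ = (p j : ℂ) • X := by
    have hv : Matrix.vecMul (star (e j)) ρ = (p j : ℂ) • star (e j) := by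
      have := congrArg star (heig j)
      rw [Matrix.star_mulVec, hρA.isHermitian.eq] at this
      rw [this, star_smul]
      simp [Complex.conj_ofReal]
    rw [hXdef, TCF.vecMulVec_mul', hv]
    ext a b
    simp [Matrix.vecMulVec_apply, Pi.smul_apply, smul_eq_mul]
    ring
  -- key computation
  have key : TCF.ptrA (τ * (X ⊗ₖ (1 : Matrix (Fin n) (Fin n) ℂ)))
      = ((1 / 2 : ℂ) * ((p j : ℂ) + (p i : ℂ))) • E X := by
    conv_lhs => rw [hE]
    rw [smul_mul_assoc, add_mul, TCF.ptrA_smul, TCF.ptrA_add]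
    have h1 : TCF.ptrA ((ρ ⊗ₖ (1 : Matrix (Fin n) (Fin n) ℂ)) * J * (X ⊗ₖ 1))
        = (p j : ℂ) • E X := by
      rw [mul_assoc, TCF.ptrA_comm, mul_assoc, ← Matrix.mul_kronecker_mul, hXρ, one_mul,
        Matrix.smul_kronecker, mul_smul_comm, TCF.ptrA_smul, ← TCF.E_eq]
    have h2 : TCF.ptrA (J * (ρ ⊗ₖ (1 : Matrix (Fin n) (Fin n) ℂ)) * (X ⊗ₖ 1))
        = (p i : ℂ) • E X := by
      rw [mul_assoc, ← Matrix.mul_kronecker_mul, one_mul, hρX,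
        Matrix.smul_kronecker, mul_smul_comm, TCF.ptrA_smul, ← TCF.E_eq]
    rw [h1, h2, smul_add, smul_smul, smul_smul, ← add_smul]
    ring_nf
  have hs : ((p i : ℂ) + (p j : ℂ)) ≠ 0 := by
    rw [← Complex.ofReal_add, Ne, Complex.ofReal_eq_zero]
    have : (0 : ℝ) < p i + p j := add_pos (hp i) (hp j)
    linarith
  show E X = (2 / ((p i : ℂ) + (p j : ℂ))) • TCF.ptrA (τ * (X ⊗ₖ 1))
  rw [key, smul_smul,
    show (2 / ((p i : ℂ) + (p j : ℂ))) * ((1 / 2 : ℂ) * ((p j : ℂ) + (p i : ℂ))) = 1 by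
      field_simp; ring,
    one_smul]
end

section
/- Let {ρ_{A;θ}} be density matrices in M_m, {t_θ} a probability distribution, ρ_A = Σ_θ t_θ ρ_{A;θ} positive definite, and {|i⟩}, {p_i} an eigenbasis and eigenvalues of ρ_A. Let ω be the matrix with entries ω_{ij} = 2/(p_i + p_j). Then each matrix ω ⊙ ρ_{A;θ}^T is positive semidefinite, and consequently Σ_θ t_θ (ω ⊙ ρ_{A;θ}^T) ⊗ ρ_{B;θ} is positive semidefinite for any density matrices ρ_{B;θ} in M_n. -/
open Matrix Kronecker
open scoped ComplexOrder

open MeasureTheory Set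

lemma myIntegral_exp_neg_mul {c : ℝ} (hc : 0 < c) :
    ∫ s in Ioi (0:ℝ), Real.exp (-(c * s)) = c⁻¹ := by
  have h := integral_comp_mul_left_Ioi (fun u => Real.exp (-u)) 0 hc
  simp only [mul_zero] at h
  rw [h, integral_exp_neg_Ioi_zero, smul_eq_mul, mul_one]

lemma cauchy_posSemidef {m : ℕ} (p : Fin m → ℝ) (hp : ∀ i, 0 < p i) :
    (Matrix.of fun i j => (((p i + p j)⁻¹ : ℝ) : ℂ)).PosSemidef := by
  rw [Matrix.posSemidef_iff_dotProduct_mulVec]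
  constructor
  · ext i j
    simp [Matrix.conjTranspose_apply, Complex.star_def, Complex.conj_ofReal, add_comm]
  · intro x
    set g : ℝ → ℂ := fun s => ∑ i, x i * ((Real.exp (-(p i * s)) : ℝ) : ℂ) with hg
    have hgg : ∀ s : ℝ, starRingEnd ℂ (g s) * g s
        = ∑ q : Fin m × Fin m, (starRingEnd ℂ (x q.1) * x q.2) *
            ((Real.exp (-((p q.1 + p q.2) * s)) : ℝ) : ℂ) := by
      intro s
      rw [hg]
      rw [map_sum, Finset.sum_mul_sum, ← Finset.sum_product']
      refine Finset.sum_congr rfl fun q _ => ?_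
      rw [show -((p q.1 + p q.2) * s) = -(p q.1 * s) + -(p q.2 * s) by ring, Real.exp_add]
      simp only [_root_.map_mul, Complex.conj_ofReal, Complex.ofReal_mul]
      ring
    have hint : ∀ q : Fin m × Fin m, IntegrableOn
        (fun s : ℝ => (starRingEnd ℂ (x q.1) * x q.2) *
          ((Real.exp (-((p q.1 + p q.2) * s)) : ℝ) : ℂ)) (Ioi 0) := by
      intro q
      apply Integrable.const_mul
      have h := exp_neg_integrableOn_Ioi 0 (show 0 < p q.1 + p q.2 by
        have := hp q.1; have := hp q.2; linarith)
      have h2 := h.ofReal (𝕜 := ℂ)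
      simp only [neg_mul] at h2
      exact h2
    have key : star x ⬝ᵥ ((Matrix.of fun i j => (((p i + p j)⁻¹ : ℝ) : ℂ)) *ᵥ x)
        = ∫ s in Ioi (0:ℝ), starRingEnd ℂ (g s) * g s := by
      rw [MeasureTheory.integral_congr_ae (Filter.Eventually.of_forall hgg)]
      rw [integral_finset_sum _ fun q _ => hint q]
      simp only [dotProduct, mulVec, Matrix.of_apply, Pi.star_apply, Finset.mul_sum]
      rw [← Finset.sum_product']
      refine Finset.sum_congr rfl fun q _ => ?_
      have hc : 0 < p q.1 + p q.2 := by have := hp q.1; have := hp q.2; linarith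
      have hval : (∫ s in Ioi (0:ℝ), ((Real.exp (-((p q.1 + p q.2) * s)) : ℝ) : ℂ))
          = (((p q.1 + p q.2)⁻¹ : ℝ) : ℂ) := by
        rw [← myIntegral_exp_neg_mul hc]; exact integral_ofReal
      rw [MeasureTheory.integral_const_mul, hval]
      simp only [Complex.star_def]
      ring
    rw [key]
    have h2 : ∫ s in Ioi (0:ℝ), starRingEnd ℂ (g s) * g s
        = ((∫ s in Ioi (0:ℝ), Complex.normSq (g s) : ℝ) : ℂ) := by
      rw [MeasureTheory.integral_congr_ae (Filter.Eventually.of_forall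
        (fun s => by rw [mul_comm, Complex.mul_conj] :
          ∀ s : ℝ, starRingEnd ℂ (g s) * g s = ((Complex.normSq (g s) : ℝ) : ℂ)))]
      exact integral_ofReal
    rw [h2]
    exact Complex.zero_le_real.mpr (integral_nonneg fun s => Complex.normSq_nonneg _)

lemma my_psd_eq {k : ℕ} {A : Matrix (Fin k) (Fin k) ℂ} (hA : A.PosSemidef) :
    ∃ B : Matrix (Fin k) (Fin k) ℂ, A = Bᴴ * B := by
  open scoped MatrixOrder in
  exact CStarAlgebra.nonneg_iff_eq_star_mul_self.mp hA.nonneg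

lemma schur_posSemidef {k : ℕ} {A C : Matrix (Fin k) (Fin k) ℂ}
    (hA : A.PosSemidef) (hC : C.PosSemidef) :
    (Matrix.of fun i j => A i j * C i j).PosSemidef := by
  have hAH := hA.1
  have hCH := hC.1
  obtain ⟨B, rfl⟩ := my_psd_eq hA
  rw [Matrix.posSemidef_iff_dotProduct_mulVec]
  constructor
  · ext i j
    rw [Matrix.conjTranspose_apply, Matrix.of_apply, Matrix.of_apply, star_mul']
    rw [← Matrix.conjTranspose_apply (Bᴴ * B) j i, ← Matrix.conjTranspose_apply C j i,
      hAH.eq, hCH.eq]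
  · intro x
    have step1 : star x ⬝ᵥ ((Matrix.of fun i j => (Bᴴ * B) i j * C i j) *ᵥ x)
        = ∑ i, ∑ j, ∑ l, star (x i) * (star (B l i) * B l j * C i j * x j) := by
      refine Finset.sum_congr rfl fun i _ => ?_
      show star (x i) * (∑ j, ((Bᴴ * B) i j * C i j) * x j) = _
      rw [Finset.mul_sum]
      refine Finset.sum_congr rfl fun j _ => ?_
      rw [Matrix.mul_apply]
      simp only [Matrix.conjTranspose_apply, Finset.sum_mul, Finset.mul_sum]
    have step2 : (∑ i, ∑ j, ∑ l, star (x i) * (star (B l i) * B l j * C i j * x j))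
        = ∑ l, ∑ i, ∑ j, star (x i) * (star (B l i) * B l j * C i j * x j) := by
      rw [Finset.sum_congr rfl fun i (_ : i ∈ Finset.univ) =>
        (Finset.sum_comm : (∑ j, ∑ l, star (x i) * (star (B l i) * B l j * C i j * x j))
          = ∑ l, ∑ j, star (x i) * (star (B l i) * B l j * C i j * x j))]
      exact Finset.sum_comm
    have step3 : ∀ l, (∑ i, ∑ j, star (x i) * (star (B l i) * B l j * C i j * x j))
        = star (fun i => B l i * x i) ⬝ᵥ (C *ᵥ fun i => B l i * x i) := by
      intro l
      refine Finset.sum_congr rfl fun i _ => ?_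
      show _ = star (B l i * x i) * (∑ j, C i j * (B l j * x j))
      rw [Finset.mul_sum]
      exact Finset.sum_congr rfl fun j _ => by rw [star_mul']; ring
    rw [step1, step2]
    exact Finset.sum_nonneg fun l _ => (step3 l) ▸ hC.dotProduct_mulVec_nonneg (fun i => B l i * x i)

lemma kron_posSemidef {a b : ℕ} {A : Matrix (Fin a) (Fin a) ℂ} {B : Matrix (Fin b) (Fin b) ℂ}
    (hA : A.PosSemidef) (hB : B.PosSemidef) : (A ⊗ₖ B).PosSemidef := by
  obtain ⟨P, rfl⟩ := my_psd_eq hA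
  obtain ⟨Q, rfl⟩ := my_psd_eq hB
  rw [Matrix.mul_kronecker_mul]
  have h : (Pᴴ ⊗ₖ Qᴴ) = (P ⊗ₖ Q)ᴴ := by
    ext ⟨i, j⟩ ⟨k, l⟩
    simp [Matrix.conjTranspose_apply, mul_comm]
  rw [h]
  exact Matrix.posSemidef_conjTranspose_mul_self _

lemma smul_posSemidef {k : Type*} [Fintype k] {A : Matrix k k ℂ} (hA : A.PosSemidef)
    {t : ℝ} (ht : 0 ≤ t) : ((t : ℂ) • A).PosSemidef := by
  rw [Matrix.posSemidef_iff_dotProduct_mulVec]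
  constructor
  · rw [Matrix.IsHermitian, Matrix.conjTranspose_smul, hA.1.eq, Complex.star_def,
      Complex.conj_ofReal]
  · intro x
    rw [Matrix.smul_mulVec, dotProduct_smul, smul_eq_mul]
    exact mul_nonneg (Complex.zero_le_real.mpr ht) (hA.dotProduct_mulVec_nonneg x)

lemma sum_posSemidef {k ι : Type*} [Fintype k] (s : Finset ι) (f : ι → Matrix k k ℂ)
    (h : ∀ i ∈ s, (f i).PosSemidef) : (∑ i ∈ s, f i).PosSemidef := by
  classical
  induction s using Finset.induction_on with
  | empty => simpa using (Matrix.PosSemidef.zero (n := k) (R := ℂ))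
  | insert _ _ hi ih =>
    rw [Finset.sum_insert hi]
    have h1 := h _ (Finset.mem_insert_self _ _)
    have h2 := ih fun i hmem => h _ (Finset.mem_insert_of_mem hmem)
    exact Matrix.posSemidef_iff_dotProduct_mulVec.mpr ⟨h1.1.add h2.1, fun x => by
      rw [Matrix.add_mulVec, dotProduct_add]
      exact add_nonneg (h1.dotProduct_mulVec_nonneg x) (h2.dotProduct_mulVec_nonneg x)⟩

/-- Let `{ρ_{A;θ}}` be density matrices in `M_m`, `{t_θ}` a probability distribution, with
average state `ρ_A = Σ_θ t_θ ρ_{A;θ}` positive definite, and let `{e i}`, `{p i}` be an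
orthonormal eigenbasis and eigenvalues of `ρ_A`.  Let `ω` have entries `ω_{ij} = 2/(p i + p j)`.
Then each matrix `ω ⊙ ρ_{A;θ}^T` (Hadamard product and transpose taken in the basis `{e i}`,
i.e. `Σ_{i,j} ω_{ij} ⟨j|ρ_{A;θ}|i⟩ |i⟩⟨j|`) is positive semidefinite, and consequently
`Σ_θ t_θ (ω ⊙ ρ_{A;θ}^T) ⊗ ρ_{B;θ}` is positive semidefinite for any density matrices
`ρ_{B;θ}` in `M_n`. -/
theorem omega_hadamard_posSemidef (m n N : ℕ)
    (t : Fin N → ℝ) (ht : ∀ θ, 0 ≤ t θ) (hts : ∑ θ, t θ = 1)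
    (ρA' : Fin N → Matrix (Fin m) (Fin m) ℂ)
    (hρA' : ∀ θ, (ρA' θ).PosSemidef ∧ (ρA' θ).trace = 1)
    (e : Fin m → (Fin m → ℂ)) (p : Fin m → ℝ)
    (horth : ∀ i j, star (e i) ⬝ᵥ e j = if i = j then (1 : ℂ) else 0)
    (heig : ∀ i, (∑ θ, (t θ : ℂ) • ρA' θ).mulVec (e i) = (p i : ℂ) • e i)
    (hp : ∀ i, 0 < p i)
    (hpos : (∑ θ, (t θ : ℂ) • ρA' θ).PosDef) :
    letI M : Fin N → Matrix (Fin m) (Fin m) ℂ := fun θ =>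
      ∑ i, ∑ j, ((2 / ((p i : ℂ) + (p j : ℂ))) *
          (star (e j) ⬝ᵥ (ρA' θ).mulVec (e i))) • Matrix.vecMulVec (e i) (star (e j))
    (∀ θ, (M θ).PosSemidef) ∧
    ∀ ρB' : Fin N → Matrix (Fin n) (Fin n) ℂ,
      (∀ θ, (ρB' θ).PosSemidef ∧ (ρB' θ).trace = 1) →
      (∑ θ, (t θ : ℂ) • (M θ ⊗ₖ ρB' θ)).PosSemidef := by
  classical
  set M : Fin N → Matrix (Fin m) (Fin m) ℂ := fun θ =>
      ∑ i, ∑ j, ((2 / ((p i : ℂ) + (p j : ℂ))) *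
          (star (e j) ⬝ᵥ (ρA' θ).mulVec (e i))) • Matrix.vecMulVec (e i) (star (e j))
    with hMdef
  set U : Matrix (Fin m) (Fin m) ℂ := Matrix.of fun a i => e i a with hU
  set A : Fin N → Matrix (Fin m) (Fin m) ℂ := fun θ => Uᴴ * ρA' θ * U with hA
  set Bm : Fin N → Matrix (Fin m) (Fin m) ℂ := fun θ =>
    Matrix.of (fun i j => (2 / ((p i : ℂ) + (p j : ℂ))) * (A θ)ᵀ i j) with hBm
  -- the Cauchy-type matrix ω is PSD
  have hωpsd : (Matrix.of fun i j : Fin m => (2 / ((p i : ℂ) + (p j : ℂ)))).PosSemidef := by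
    have h2 : (Matrix.of fun i j : Fin m => (2 / ((p i : ℂ) + (p j : ℂ))))
        = ((2 : ℝ) : ℂ) • Matrix.of fun i j => (((p i + p j)⁻¹ : ℝ) : ℂ) := by
      ext i j
      simp only [Matrix.of_apply, Matrix.smul_apply, smul_eq_mul]
      push_cast
      rw [div_eq_mul_inv]
    rw [h2]
    exact smul_posSemidef (cauchy_posSemidef p hp) (by norm_num)
  have hApsd : ∀ θ, (A θ).PosSemidef := fun θ => ((hρA' θ).1).conjTranspose_mul_mul_same U
  have hBpsd : ∀ θ, (Bm θ).PosSemidef := fun θ =>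
    schur_posSemidef hωpsd ((hApsd θ).transpose)
  have hAentry : ∀ θ (i j : Fin m), A θ j i = star (e j) ⬝ᵥ (ρA' θ).mulVec (e i) := by
    intro θ i j
    rw [hA]
    simp only [Matrix.mul_apply, Matrix.conjTranspose_apply, hU, Matrix.of_apply,
      dotProduct, Matrix.mulVec, Pi.star_apply, Finset.sum_mul, Finset.mul_sum]
    rw [Finset.sum_comm]
    exact Finset.sum_congr rfl fun a _ => Finset.sum_congr rfl fun b _ => by ring
  have hM : ∀ θ, M θ = U * Bm θ * Uᴴ := by
    intro θ
    rw [hMdef]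
    ext a b
    simp only [Matrix.sum_apply, Matrix.smul_apply, Matrix.vecMulVec_apply, Pi.star_apply,
      smul_eq_mul, Matrix.mul_apply, Matrix.conjTranspose_apply, hBm, hU, Matrix.of_apply,
      Matrix.transpose_apply, ← hAentry θ, Finset.sum_mul, Finset.mul_sum]
    rw [Finset.sum_comm]
    refine Finset.sum_congr rfl fun j _ => Finset.sum_congr rfl fun i _ => by ring
  have part1 : ∀ θ, (M θ).PosSemidef := by
    intro θ
    rw [hM θ]
    exact (hBpsd θ).mul_mul_conjTranspose_same U
  refine ⟨part1, ?_⟩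
  intro ρB' hρB'
  exact sum_posSemidef _ _ fun θ _ =>
    smul_posSemidef (kron_posSemidef (part1 θ) (hρB' θ).1) (ht θ)
end

section
/- Let τ ∈ M_m ⊗ M_n be a separable density matrix with ρ_A = Tr_B[τ] positive definite, having eigenbasis {|i⟩} and eigenvalues p_i. Let E be the temporal channel E(|i⟩⟨j|) = (2/(p_i+p_j)) Tr_A[τ(|i⟩⟨j| ⊗ 1)], let D(A) = Σ_{i,j} (2√(p_i p_j)/(p_i+p_j)) |i⟩⟨i| A |j⟩⟨j|, and let G(A) = Tr_A[τ((ρ_A^{-1/2} A ρ_A^{-1/2}) ⊗ 1)]. Then E = G ∘ D. -/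
open Matrix Kronecker
open scoped ComplexOrder

namespace TCaux
variable {m : ℕ}

lemma vmv_mul_vmv (u v w x : Fin m → ℂ) :
    Matrix.vecMulVec u v * Matrix.vecMulVec w x = (v ⬝ᵥ w) • Matrix.vecMulVec u x := by
  ext i j
  simp only [Matrix.mul_apply, Matrix.vecMulVec_apply, Matrix.smul_apply, dotProduct,
    smul_eq_mul, Finset.sum_mul]
  exact Finset.sum_congr rfl fun k _ => by ring

lemma mul_vmv (M : Matrix (Fin m) (Fin m) ℂ) (u v : Fin m → ℂ) :
    M * Matrix.vecMulVec u v = Matrix.vecMulVec (M *ᵥ u) v := by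
  ext i j
  simp only [Matrix.mul_apply, Matrix.vecMulVec_apply, Matrix.mulVec, dotProduct, Finset.sum_mul]
  exact Finset.sum_congr rfl fun k _ => by ring

lemma vmv_mul (M : Matrix (Fin m) (Fin m) ℂ) (u v : Fin m → ℂ) :
    Matrix.vecMulVec u v * M = Matrix.vecMulVec u (v ᵥ* M) := by
  ext i j
  simp only [Matrix.mul_apply, Matrix.vecMulVec_apply, Matrix.vecMul, dotProduct, Finset.mul_sum]
  exact Finset.sum_congr rfl fun k _ => by ring

lemma vmv_mulVec (u v x : Fin m → ℂ) :
    Matrix.vecMulVec u v *ᵥ x = (v ⬝ᵥ x) • u := by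
  ext i
  simp only [Matrix.mulVec, Matrix.vecMulVec_apply, dotProduct, Pi.smul_apply, smul_eq_mul,
    Finset.mul_sum]
  rw [Finset.sum_mul]
  exact Finset.sum_congr rfl fun k _ => by ring

lemma smul_vmv (c : ℂ) (u v : Fin m → ℂ) :
    Matrix.vecMulVec (c • u) v = c • Matrix.vecMulVec u v := by
  ext i j; simp [Matrix.vecMulVec_apply, mul_assoc]

lemma vmv_smul (c : ℂ) (u v : Fin m → ℂ) :
    Matrix.vecMulVec u (c • v) = c • Matrix.vecMulVec u v := by
  ext i j; simp [Matrix.vecMulVec_apply]; ring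

lemma star_dot (x u : Fin m → ℂ) :
    star x ⬝ᵥ u = starRingEnd ℂ (star u ⬝ᵥ x) := by
  simp only [dotProduct, map_sum, _root_.map_mul, Pi.star_apply, RingHom.coe_coe]
  exact Finset.sum_congr rfl fun k _ => by simp [mul_comm]

lemma vmv_herm (u : Fin m → ℂ) :
    (Matrix.vecMulVec u (star u))ᴴ = Matrix.vecMulVec u (star u) := by
  ext i j
  simp [Matrix.conjTranspose_apply, Matrix.vecMulVec_apply, mul_comm]

lemma sum_mulVec' {ι : Type*} (s : Finset ι) (f : ι → Matrix (Fin m) (Fin m) ℂ)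
    (x : Fin m → ℂ) : (∑ a ∈ s, f a) *ᵥ x = ∑ a ∈ s, f a *ᵥ x := by
  ext i
  simp only [Matrix.mulVec, dotProduct, Matrix.sum_apply, Finset.sum_apply, Finset.sum_mul]
  exact Finset.sum_comm

variable (e : Fin m → Fin m → ℂ)
variable (horth : ∀ i j, star (e i) ⬝ᵥ e j = if i = j then (1 : ℂ) else 0)

include horth in
lemma sum_proj : ∑ i, Matrix.vecMulVec (e i) (star (e i)) = (1 : Matrix (Fin m) (Fin m) ℂ) := by
  have hU : (Matrix.of fun k i : Fin m => e i k)ᴴ * (Matrix.of fun k i : Fin m => e i k) = 1 := by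
    ext i j
    have := horth i j
    simpa [Matrix.mul_apply, Matrix.conjTranspose_apply, dotProduct, Matrix.one_apply] using this
  have hUU := mul_eq_one_comm.mp hU
  rw [← hUU]
  ext k l
  simp [Matrix.sum_apply, Matrix.mul_apply, Matrix.conjTranspose_apply, Matrix.vecMulVec_apply]

variable (p : Fin m → ℝ) {ρA : Matrix (Fin m) (Fin m) ℂ}
variable (heig : ∀ i, ρA *ᵥ e i = ((p i : ℝ) : ℂ) • e i) (hp : ∀ i, 0 < p i)

noncomputable def msq (hρA : ρA.PosDef) : Matrix (Fin m) (Fin m) ℂ :=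
  hρA.posSemidef.1.eigenvectorUnitary.1 *
    diagonal ((↑) ∘ (√·) ∘ hρA.posSemidef.1.eigenvalues) *
    (star hρA.posSemidef.1.eigenvectorUnitary : Matrix (Fin m) (Fin m) ℂ)

include horth heig hp in
lemma sqrt_mulVec_eig (hρA : ρA.PosDef) (i : Fin m) :
    msq hρA *ᵥ e i = ((Real.sqrt (p i) : ℂ)) • e i := by
  classical
  unfold msq
  have hspec := hρA.posSemidef.1.spectral_theorem
  rw [Unitary.conjStarAlgAut_apply] at hspec
  set U := hρA.posSemidef.1.eigenvectorUnitary with hU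
  set lam := hρA.posSemidef.1.eigenvalues with hlam
  have hUs : (star U : Matrix (Fin m) (Fin m) ℂ) * (U : Matrix (Fin m) (Fin m) ℂ) = 1 :=
    Unitary.coe_star_mul_self U
  have hsU : (U : Matrix (Fin m) (Fin m) ℂ) * (star U : Matrix (Fin m) (Fin m) ℂ) = 1 :=
    Unitary.coe_mul_star_self U
  have hdv : ∀ k, ((lam k : ℝ) : ℂ) * ((star U : Matrix (Fin m) (Fin m) ℂ) *ᵥ e i) k
      = (p i : ℂ) * ((star U : Matrix (Fin m) (Fin m) ℂ) *ᵥ e i) k := by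
    have h := congrArg (fun w => (star U : Matrix (Fin m) (Fin m) ℂ) *ᵥ w) (heig i)
    rw [hspec, Matrix.mulVec_mulVec, ← Matrix.mul_assoc,
      ← Matrix.mul_assoc, hUs, Matrix.one_mul, ← Matrix.mulVec_mulVec, Matrix.mulVec_smul] at h
    intro k
    have := congrFun h k
    rw [Matrix.mulVec_diagonal] at this
    exact this
  rw [← Matrix.mulVec_mulVec, ← Matrix.mulVec_mulVec]
  have hd : diagonal (((↑) ∘ (√·) ∘ lam : Fin m → ℂ)) *ᵥ
      ((star U : Matrix (Fin m) (Fin m) ℂ) *ᵥ e i)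
      = ((Real.sqrt (p i) : ℂ)) • ((star U : Matrix (Fin m) (Fin m) ℂ) *ᵥ e i) := by
    ext k
    rw [Matrix.mulVec_diagonal, Pi.smul_apply, smul_eq_mul]
    by_cases hk : ((star U : Matrix (Fin m) (Fin m) ℂ) *ᵥ e i) k = 0
    · simp [hk]
    have hl : lam k = p i := by exact_mod_cast mul_right_cancel₀ hk (hdv k)
    simp [hl]
  rw [hd, Matrix.mulVec_smul, Matrix.mulVec_mulVec, hsU, Matrix.one_mulVec]

omit horth in
lemma msq_mul_self (hρA : ρA.PosDef) : msq hρA * msq hρA = ρA := by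
  classical
  unfold msq
  have hspec := hρA.posSemidef.1.spectral_theorem
  rw [Unitary.conjStarAlgAut_apply] at hspec
  set U := hρA.posSemidef.1.eigenvectorUnitary with hU
  set lam := hρA.posSemidef.1.eigenvalues with hlam
  have hUs : (star U : Matrix (Fin m) (Fin m) ℂ) * (U : Matrix (Fin m) (Fin m) ℂ) = 1 :=
    Unitary.coe_star_mul_self U
  have hd : diagonal (((↑) ∘ (√·) ∘ lam : Fin m → ℂ)) * diagonal (((↑) ∘ (√·) ∘ lam : Fin m → ℂ))
      = diagonal (RCLike.ofReal ∘ lam) := by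
    rw [Matrix.diagonal_mul_diagonal]
    congr 1
    funext k
    show ((Real.sqrt (lam k) : ℝ) : ℂ) * ((Real.sqrt (lam k) : ℝ) : ℂ) = ((lam k : ℝ) : ℂ)
    rw [← Complex.ofReal_mul, Real.mul_self_sqrt (hρA.posSemidef.eigenvalues_nonneg k)]
  conv_rhs => rw [hspec]
  simp only [Matrix.mul_assoc]
  rw [← Matrix.mul_assoc (star U : Matrix (Fin m) (Fin m) ℂ) (U : Matrix (Fin m) (Fin m) ℂ), hUs,
    Matrix.one_mul, ← Matrix.mul_assoc (diagonal _) (diagonal _), hd]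

omit horth in
lemma msq_herm (hρA : ρA.PosDef) : (msq hρA).IsHermitian := by
  unfold msq
  simp only [IsHermitian, conjTranspose_mul, Unitary.coe_star, star_eq_conjTranspose,
    conjTranspose_conjTranspose, diagonal_conjTranspose, Matrix.mul_assoc]
  congr 3
  funext k
  simp

omit horth in
lemma sqrt_isUnit_det (hρA : ρA.PosDef) : IsUnit (msq hρA).det := by
  have h2 : msq hρA * msq hρA = ρA := msq_mul_self hρA
  have hd : (msq hρA).det * (msq hρA).det = ρA.det := by
    rw [← Matrix.det_mul, h2]
  have : ρA.det ≠ 0 := hρA.det_pos.ne'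
  rw [← hd] at this
  exact (mul_ne_zero_iff.mp this).1.isUnit

include horth heig hp in
lemma sqrt_inv_mulVec_eig (hρA : ρA.PosDef) (i : Fin m) :
    (msq hρA)⁻¹ *ᵥ e i = ((Real.sqrt (p i) : ℂ))⁻¹ • e i := by
  have hS := sqrt_mulVec_eig e horth p heig hp hρA i
  have hdet := sqrt_isUnit_det hρA
  have hc : ((Real.sqrt (p i) : ℂ)) ≠ 0 := by
    simpa using (Real.sqrt_pos.mpr (hp i)).ne'
  have h := congrArg (fun v => (msq hρA)⁻¹ *ᵥ v) hS
  simp only [Matrix.mulVec_mulVec, Matrix.nonsing_inv_mul _ hdet, Matrix.one_mulVec,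
    Matrix.mulVec_smul] at h
  rw [eq_inv_smul_iff₀ hc]
  exact h.symm

include horth heig hp in
lemma sqrt_inv_vecMul_eig (hρA : ρA.PosDef) (i : Fin m) :
    star (e i) ᵥ* (msq hρA)⁻¹ = ((Real.sqrt (p i) : ℂ))⁻¹ • star (e i) := by
  have hherm : ((msq hρA)⁻¹).IsHermitian := (msq_herm hρA).inv
  have h := congrArg star (sqrt_inv_mulVec_eig e horth p heig hp hρA i)
  rw [Matrix.star_mulVec, hherm.eq] at h
  rw [h, star_smul]
  congr 1
  simp [Complex.conj_ofReal]

noncomputable def GLdef {m n : ℕ} (τ : Matrix (Fin m × Fin n) (Fin m × Fin n) ℂ)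
    (S : Matrix (Fin m) (Fin m) ℂ) :
    Matrix (Fin m) (Fin m) ℂ →ₗ[ℂ] Matrix (Fin n) (Fin n) ℂ where
  toFun := fun X => Matrix.of fun k l : Fin n => ∑ a,
    (τ * ((S⁻¹ * X * S⁻¹) ⊗ₖ (1 : Matrix (Fin n) (Fin n) ℂ))) (a, k) (a, l)
  map_add' := by
    intro X Y
    ext k l
    simp [Matrix.mul_add, Matrix.add_mul, Matrix.add_kronecker, Matrix.add_apply,
      Finset.sum_add_distrib]
  map_smul' := by
    intro c X
    ext k l
    simp [Matrix.mul_smul, Matrix.smul_mul, Matrix.smul_kronecker, Finset.mul_sum]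

noncomputable def DLdef {m : ℕ} (e : Fin m → Fin m → ℂ) (p : Fin m → ℝ) :
    Matrix (Fin m) (Fin m) ℂ →ₗ[ℂ] Matrix (Fin m) (Fin m) ℂ where
  toFun := fun X => ∑ i, ∑ j, ((2 * Real.sqrt (p i * p j) / (p i + p j) : ℝ) : ℂ) •
    (Matrix.vecMulVec (e i) (star (e i)) * X * Matrix.vecMulVec (e j) (star (e j)))
  map_add' := by
    intro X Y
    simp [Matrix.mul_add, Matrix.add_mul, smul_add, Finset.sum_add_distrib]
  map_smul' := by
    intro c X
    simp only [Matrix.mul_smul, Matrix.smul_mul, RingHom.id_apply, Finset.smul_sum, smul_smul]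
    exact Finset.sum_congr rfl fun i _ => Finset.sum_congr rfl fun j _ => by rw [mul_comm]

end TCaux

open TCaux in
/-- **The temporal channel of a separable state factors as dephasing followed by a
pretty good measure-and-prepare map:** `E = G ∘ D`. -/
theorem temporal_channel_eq_G_comp_D (m n N : ℕ)
    (t : Fin N → ℝ) (ht : ∀ θ, 0 ≤ t θ) (hts : ∑ θ, t θ = 1)
    (ρA' : Fin N → Matrix (Fin m) (Fin m) ℂ) (ρB' : Fin N → Matrix (Fin n) (Fin n) ℂ)
    (hρA' : ∀ θ, (ρA' θ).PosSemidef ∧ (ρA' θ).trace = 1)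
    (hρB' : ∀ θ, (ρB' θ).PosSemidef ∧ (ρB' θ).trace = 1)
    (τ : Matrix (Fin m × Fin n) (Fin m × Fin n) ℂ)
    (hτ : τ = ∑ θ, (t θ : ℂ) • (ρA' θ ⊗ₖ ρB' θ))
    (e : Fin m → (Fin m → ℂ)) (p : Fin m → ℝ)
    (horth : ∀ i j, star (e i) ⬝ᵥ e j = if i = j then (1 : ℂ) else 0)
    (heig : ∀ i, (Matrix.of fun i j : Fin m => ∑ k, τ (i, k) (j, k)).mulVec (e i)
        = (p i : ℂ) • e i)
    (hp : ∀ i, 0 < p i)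
    (hρA : (Matrix.of fun i j : Fin m => ∑ k, τ (i, k) (j, k)).PosDef)
    (E : Matrix (Fin m) (Fin m) ℂ →ₗ[ℂ] Matrix (Fin n) (Fin n) ℂ)
    (hE : ∀ i j : Fin m,
      E (Matrix.vecMulVec (e i) (star (e j))) =
        (2 / ((p i : ℂ) + (p j : ℂ))) •
          (Matrix.of fun k l : Fin n => ∑ a,
            (τ * (Matrix.vecMulVec (e i) (star (e j)) ⊗ₖ
                (1 : Matrix (Fin n) (Fin n) ℂ))) (a, k) (a, l))) :
    -- the generalized dephasing channel `D` in the eigenbasis of `ρ_A` ...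
    letI D : Matrix (Fin m) (Fin m) ℂ → Matrix (Fin m) (Fin m) ℂ := fun A =>
      ∑ i, ∑ j, ((2 * Real.sqrt (p i * p j) / (p i + p j) : ℝ) : ℂ) •
        (Matrix.vecMulVec (e i) (star (e i)) * A * Matrix.vecMulVec (e j) (star (e j)))
    -- ... the pretty good measure-and-prepare map `G` ...
    letI S : Matrix (Fin m) (Fin m) ℂ := hρA.posSemidef.1.eigenvectorUnitary.1 *
      diagonal ((↑) ∘ (√·) ∘ hρA.posSemidef.1.eigenvalues) *
      (star hρA.posSemidef.1.eigenvectorUnitary : Matrix (Fin m) (Fin m) ℂ)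
    letI G : Matrix (Fin m) (Fin m) ℂ → Matrix (Fin n) (Fin n) ℂ := fun A =>
      Matrix.of fun k l : Fin n => ∑ a,
        (τ * ((S⁻¹ * A * S⁻¹) ⊗ₖ (1 : Matrix (Fin n) (Fin n) ℂ))) (a, k) (a, l)
    -- ... satisfy `E = G ∘ D`
    ∀ A : Matrix (Fin m) (Fin m) ℂ, E A = G (D A) := by
  intro A
  classical
  have hSinv_mv := sqrt_inv_mulVec_eig e horth p heig hp hρA
  have hSinv_vm := sqrt_inv_vecMul_eig e horth p heig hp hρA
  set S : Matrix (Fin m) (Fin m) ℂ := msq hρA with hSdef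
  set Gmap := GLdef τ S with hGm
  set Dmap := DLdef e p with hDm
  show E A = Gmap (Dmap A)
  -- products of projectors
  have hPT : ∀ a i j, Matrix.vecMulVec (e a) (star (e a)) * Matrix.vecMulVec (e i) (star (e j))
      = if a = i then Matrix.vecMulVec (e a) (star (e j)) else 0 := by
    intro a i j
    rw [vmv_mul_vmv, horth]
    split <;> simp
  have hTP : ∀ i j b, Matrix.vecMulVec (e i) (star (e j)) * Matrix.vecMulVec (e b) (star (e b))
      = if j = b then Matrix.vecMulVec (e i) (star (e b)) else 0 := by
    intro i j b
    rw [vmv_mul_vmv, horth]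
    split <;> simp
  -- action of Dmap on the eigenbasis
  have hDT : ∀ i j, Dmap (Matrix.vecMulVec (e i) (star (e j)))
      = ((2 * Real.sqrt (p i * p j) / (p i + p j) : ℝ) : ℂ) •
        Matrix.vecMulVec (e i) (star (e j)) := by
    intro i j
    show (∑ a, ∑ b, ((2 * Real.sqrt (p a * p b) / (p a + p b) : ℝ) : ℂ) •
        (Matrix.vecMulVec (e a) (star (e a)) * Matrix.vecMulVec (e i) (star (e j)) *
         Matrix.vecMulVec (e b) (star (e b)))) = _
    have key : ∀ a b, ((2 * Real.sqrt (p a * p b) / (p a + p b) : ℝ) : ℂ) •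
        (Matrix.vecMulVec (e a) (star (e a)) * Matrix.vecMulVec (e i) (star (e j)) *
         Matrix.vecMulVec (e b) (star (e b)))
        = if a = i then (if b = j then ((2 * Real.sqrt (p a * p b) / (p a + p b) : ℝ) : ℂ) •
            Matrix.vecMulVec (e i) (star (e j)) else 0) else 0 := by
      intro a b
      rcases eq_or_ne a i with h | h
      · subst h
        rcases eq_or_ne b j with h2 | h2
        · subst h2
          rw [hPT, if_pos rfl, hTP, if_pos rfl, if_pos rfl, if_pos rfl]
        · rw [hPT, if_pos rfl, hTP, if_neg (Ne.symm h2), if_pos rfl, if_neg h2, smul_zero]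
      · rw [hPT, if_neg h, Matrix.zero_mul, smul_zero, if_neg h]
    simp only [key]
    rw [Finset.sum_eq_single i (fun a _ ha => by simp [ha])
      (fun h => absurd (Finset.mem_univ i) h)]
    simp only [if_pos rfl]
    rw [Finset.sum_eq_single j (fun b _ hb => by simp [hb])
      (fun h => absurd (Finset.mem_univ j) h)]
    simp
  -- action of S⁻¹ conjugation on the eigenbasis
  have hSTS : ∀ i j, S⁻¹ * Matrix.vecMulVec (e i) (star (e j)) * S⁻¹
      = (((Real.sqrt (p i) : ℂ))⁻¹ * ((Real.sqrt (p j) : ℂ))⁻¹) •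
        Matrix.vecMulVec (e i) (star (e j)) := by
    intro i j
    rw [hSdef, mul_vmv, hSinv_mv, smul_vmv, Matrix.smul_mul, vmv_mul, hSinv_vm, vmv_smul,
      smul_smul]
  have hGsc : ∀ (c : ℂ) (X : Matrix (Fin m) (Fin m) ℂ),
      (Matrix.of fun k l : Fin n => ∑ a,
        (τ * ((c • X) ⊗ₖ (1 : Matrix (Fin n) (Fin n) ℂ))) (a, k) (a, l))
      = c • Matrix.of fun k l : Fin n => ∑ a,
        (τ * (X ⊗ₖ (1 : Matrix (Fin n) (Fin n) ℂ))) (a, k) (a, l) := by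
    intro c X
    ext k l
    simp [Matrix.smul_kronecker, Matrix.mul_smul, Finset.mul_sum]
  -- agreement on the eigenbasis
  have hcomp : ∀ i j, E (Matrix.vecMulVec (e i) (star (e j)))
      = Gmap (Dmap (Matrix.vecMulVec (e i) (star (e j)))) := by
    intro i j
    rw [hE i j, hDT, _root_.map_smul]
    have hGLT : Gmap (Matrix.vecMulVec (e i) (star (e j)))
        = (((Real.sqrt (p i) : ℂ))⁻¹ * ((Real.sqrt (p j) : ℂ))⁻¹) •
          (Matrix.of fun k l : Fin n => ∑ a,
            (τ * (Matrix.vecMulVec (e i) (star (e j)) ⊗ₖ (1 : Matrix (Fin n) (Fin n) ℂ)))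
              (a, k) (a, l)) := by
      show (Matrix.of fun k l : Fin n => ∑ a,
          (τ * ((S⁻¹ * Matrix.vecMulVec (e i) (star (e j)) * S⁻¹) ⊗ₖ
            (1 : Matrix (Fin n) (Fin n) ℂ))) (a, k) (a, l)) = _
      rw [hSTS, hGsc]
    rw [hGLT, smul_smul]
    congr 1
    have hi : (Real.sqrt (p i) : ℂ) ≠ 0 := by
      simpa using (Real.sqrt_pos.mpr (hp i)).ne'
    have hj : (Real.sqrt (p j) : ℂ) ≠ 0 := by
      simpa using (Real.sqrt_pos.mpr (hp j)).ne'
    have hij : ((p i : ℂ) + (p j : ℂ)) ≠ 0 := by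
      rw [← Complex.ofReal_add, Complex.ofReal_ne_zero]
      exact (add_pos (hp i) (hp j)).ne'
    rw [Real.sqrt_mul (hp i).le]
    push_cast
    field_simp
  -- decomposition of A in the eigenbasis
  have hdecomp : A = ∑ i, ∑ j, (star (e i) ⬝ᵥ (A *ᵥ e j)) •
      Matrix.vecMulVec (e i) (star (e j)) := by
    have h1 := sum_proj e horth
    calc A = (∑ i, Matrix.vecMulVec (e i) (star (e i))) * A *
          (∑ j, Matrix.vecMulVec (e j) (star (e j))) := by rw [h1, one_mul, mul_one]
      _ = ∑ j, ∑ i, (Matrix.vecMulVec (e i) (star (e i)) * A) *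
          Matrix.vecMulVec (e j) (star (e j)) := by
          rw [Matrix.mul_sum]
          exact Finset.sum_congr rfl fun j _ => by rw [Matrix.sum_mul, Matrix.sum_mul]
      _ = ∑ i, ∑ j, (star (e i) ⬝ᵥ (A *ᵥ e j)) • Matrix.vecMulVec (e i) (star (e j)) := by
          rw [Finset.sum_comm]
          refine Finset.sum_congr rfl fun i _ => Finset.sum_congr rfl fun j _ => ?_
          rw [vmv_mul, vmv_mul_vmv, ← Matrix.dotProduct_mulVec]
  -- conclude by linearity
  calc E A = ∑ i, ∑ j, (star (e i) ⬝ᵥ (A *ᵥ e j)) •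
        E (Matrix.vecMulVec (e i) (star (e j))) := by
        conv_lhs => rw [hdecomp]
        simp only [map_sum, _root_.map_smul]
    _ = ∑ i, ∑ j, (star (e i) ⬝ᵥ (A *ᵥ e j)) •
        Gmap (Dmap (Matrix.vecMulVec (e i) (star (e j)))) := by
        exact Finset.sum_congr rfl fun i _ => Finset.sum_congr rfl fun j _ => by rw [hcomp]
    _ = Gmap (Dmap A) := by
        conv_rhs => rw [hdecomp]
        simp only [map_sum, _root_.map_smul]
end

section
/- Let {ρ_θ}_{θ∈Θ} be density matrices in M_m and {t_θ} strictly positive probabilities, with average state ρ = Σ_θ t_θ ρ_θ. If there exists a POVM {E_φ}_{φ∈Φ} and a surjection f: Φ → Θ such that Tr[ρ_θ E_φ] t_θ = δ_{θ, f(φ)} Tr[ρ E_φ] for all θ, φ, then the states are pairwise orthogonal: Tr[ρ_θ ρ_ϑ] = 0 for all θ ≠ ϑ. -/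
open Matrix
open scoped ComplexOrder

lemma trace_conjT_mul_self_eq_zero {n k : ℕ} (A : Matrix (Fin n) (Fin k) ℂ)
    (h : (Aᴴ * A).trace = 0) : A = 0 := by
  have h' : ∑ j, ∑ i, Complex.normSq (A i j) = 0 := by
    have := congrArg Complex.re h
    rw [Matrix.trace] at this
    simpa [Matrix.diag, Matrix.mul_apply, Complex.normSq_eq_conj_mul_self, Complex.normSq_apply,
      Complex.re_sum] using this
  ext i j
  have := (Finset.sum_eq_zero_iff_of_nonneg (fun j _ => Finset.sum_nonneg
    (fun i _ => Complex.normSq_nonneg (A i j)))).mp h' j (Finset.mem_univ j)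
  have := (Finset.sum_eq_zero_iff_of_nonneg
    (fun i _ => Complex.normSq_nonneg (A i j))).mp this i (Finset.mem_univ i)
  simpa using Complex.normSq_eq_zero.mp this

/-- If A, B are PSD and Tr[A*B]=0 then A*B = 0. -/
lemma psd_trace_mul_eq_zero {n : ℕ} {A B : Matrix (Fin n) (Fin n) ℂ}
    (hA : A.PosSemidef) (hB : B.PosSemidef) (h : (A * B).trace = 0) : A * B = 0 := by
  obtain ⟨sA, hAH, hAs⟩ : ∃ s : Matrix (Fin n) (Fin n) ℂ, sᴴ = s ∧ s * s = A :=
    by open scoped MatrixOrder in exact ⟨CFC.sqrt A, (CFC.sqrt_nonneg A).posSemidef.isHermitian, CFC.sqrt_mul_sqrt_self A hA.nonneg⟩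
  obtain ⟨sB, hBH, hBs⟩ : ∃ s : Matrix (Fin n) (Fin n) ℂ, sᴴ = s ∧ s * s = B :=
    by open scoped MatrixOrder in exact ⟨CFC.sqrt B, (CFC.sqrt_nonneg B).posSemidef.isHermitian, CFC.sqrt_mul_sqrt_self B hB.nonneg⟩
  have key : ((sB * sA)ᴴ * (sB * sA)).trace = 0 := by
    rw [conjTranspose_mul, hAH, hBH]
    calc (sA * sB * (sB * sA)).trace = (sA * (sB * (sB * sA))).trace := by
          rw [Matrix.mul_assoc]
      _ = ((sB * (sB * sA)) * sA).trace := Matrix.trace_mul_comm _ _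
      _ = (B * A).trace := by
          rw [← hAs, ← hBs]; congr 1; noncomm_ring
      _ = (A * B).trace := trace_mul_comm _ _
      _ = 0 := h
  have hz : sB * sA = 0 := trace_conjT_mul_self_eq_zero _ key
  have hBA : B * A = 0 := by
    rw [← hAs, ← hBs]
    calc sB * sB * (sA * sA) = sB * (sB * sA) * sA := by noncomm_ring
      _ = 0 := by rw [hz]; simp
  have := congrArg conjTranspose hBA
  rwa [conjTranspose_mul, hA.isHermitian, hB.isHermitian, conjTranspose_zero] at this

/-- **Perfectly distinguishable ensembles are orthogonal.**
If `{ρ θ}` are density matrices, `{t θ}` strictly positive probabilities with average state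
`ρ = Σ_θ t_θ ρ_θ`, and there is a POVM `{E φ}` together with a surjection `f : Φ → Θ` such
that `Tr[ρ_θ E_φ] t_θ = δ_{θ, f(φ)} Tr[ρ E_φ]` for all `θ, φ`, then the states are pairwise
orthogonal: `Tr[ρ_θ ρ_ϑ] = 0` for `θ ≠ ϑ`. -/
theorem perfectly_distinguishable_implies_orthogonal (m : ℕ)
    (Θ Φ : Type) [Fintype Θ] [Fintype Φ] [DecidableEq Θ]
    (ρ' : Θ → Matrix (Fin m) (Fin m) ℂ)
    (hρ' : ∀ θ, (ρ' θ).PosSemidef ∧ (ρ' θ).trace = 1)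
    (t : Θ → ℝ) (ht : ∀ θ, 0 < t θ) (hts : ∑ θ, t θ = 1)
    (E : Φ → Matrix (Fin m) (Fin m) ℂ)
    (hE : ∀ φ, (E φ).PosSemidef) (hEsum : (∑ φ, E φ) = 1)
    (f : Φ → Θ) (hf : Function.Surjective f)
    (hdist : ∀ θ φ, (ρ' θ * E φ).trace * (t θ : ℂ) =
      (if θ = f φ then 1 else 0) * ((∑ ν, (t ν : ℂ) • ρ' ν) * E φ).trace) :
    ∀ θ ϑ, θ ≠ ϑ → (ρ' θ * ρ' ϑ).trace = 0 := by
  -- For θ ≠ f φ, ρ' θ * E φ = 0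
  have key : ∀ θ φ, θ ≠ f φ → ρ' θ * E φ = 0 := by
    intro θ φ hne
    have h := hdist θ φ
    rw [if_neg hne, zero_mul] at h
    have htne : (t θ : ℂ) ≠ 0 := by
      exact_mod_cast (ht θ).ne'
    have htr : (ρ' θ * E φ).trace = 0 := by
      rcases mul_eq_zero.mp h with h' | h'
      · exact h'
      · exact absurd h' htne
    exact psd_trace_mul_eq_zero (hρ' θ).1 (hE φ) htr
  have key2 : ∀ θ φ, θ ≠ f φ → E φ * ρ' θ = 0 := by
    intro θ φ hne
    have := congrArg conjTranspose (key θ φ hne)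
    rwa [conjTranspose_mul, (hρ' θ).1.isHermitian, (hE φ).isHermitian,
      conjTranspose_zero] at this
  intro θ ϑ hne
  have expand : ρ' θ * ρ' ϑ = ∑ φ, ρ' θ * E φ * ρ' ϑ := by
    rw [← Finset.sum_mul, ← Finset.mul_sum, hEsum, mul_one]
  rw [expand, trace_sum]
  apply Finset.sum_eq_zero
  intro φ _
  by_cases hθ : θ = f φ
  · have : E φ * ρ' ϑ = 0 := key2 ϑ φ (by rw [← hθ]; exact hne.symm)
    rw [Matrix.mul_assoc, this, Matrix.mul_zero, trace_zero]
  · rw [key θ φ hθ, Matrix.zero_mul, trace_zero]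
end
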